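/- arXiv:2407.19423 — 5 statements merged into one kernel-verified Lean document; each statement's English description precedes it below -/
import Mathlib

section
/- For any two subcomplexes K and L of the full simplex Δ^[m] on the vertex set [m] and any field F, one has t̃b(K;F) + t̃b(L;F) ≤ t̃b(K∩L;F) + t̃b(K∪L;F). -/
/-- An (abstract) simplicial complex: a collection of finite subsets of `ℕ`
closed under taking subsets. -/
def IsComplex (K : Finset (Finset ℕ)) : Prop :=
  ∀ σ ∈ K, ∀ τ ⊆ σ, τ ∈ K

/-- The vertex set of a complex: the union of all its simplices. -/
def verts (K : Finset (Finset ℕ)) : Finset ℕ := K.sup id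

/-- The space of (augmented) simplicial `j`-chains: formal `F`-linear combinations of
simplices of cardinality `j` (so chain degree `j` corresponds to dimension `j - 1`;
degree `0` is spanned by the empty simplex). -/
abbrev Chain (F : Type*) [Field F] (K : Finset (Finset ℕ)) (j : ℕ) : Type _ :=
  {σ // σ ∈ K.filter (fun σ => σ.card = j)} → F

/-- The simplicial boundary operator (of the augmented chain complex), with the usual
signs `(-1)^{position of the deleted vertex}`. -/
noncomputable def bdry (F : Type*) [Field F] (K : Finset (Finset ℕ)) (j : ℕ) :
    Chain F K (j + 1) →ₗ[F] Chain F K j where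
  toFun c := fun τ =>
    ∑ v ∈ verts K,
      if h : v ∉ τ.1 ∧ insert v τ.1 ∈ K.filter (fun σ => σ.card = j + 1) then
        (-1 : F) ^ ((τ.1.filter (fun u => u < v)).card) * c ⟨insert v τ.1, h.2⟩
      else 0
  map_add' c d := by
    funext τ
    show _ = (_ : F) + (_ : F)
    rw [← Finset.sum_add_distrib]
    refine Finset.sum_congr rfl fun v _ => ?_
    by_cases h : v ∉ τ.1 ∧ insert v τ.1 ∈ K.filter (fun σ => σ.card = j + 1)
    · rw [dif_pos h, dif_pos h, dif_pos h, ← mul_add]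
      rfl
    · rw [dif_neg h, dif_neg h, dif_neg h, add_zero]
  map_smul' a c := by
    funext τ
    show _ = a * _
    rw [Finset.mul_sum]
    refine Finset.sum_congr rfl fun v _ => ?_
    by_cases h : v ∉ τ.1 ∧ insert v τ.1 ∈ K.filter (fun σ => σ.card = j + 1)
    · rw [dif_pos h, dif_pos h]
      show _ * (a * _) = _
      ring
    · rw [dif_neg h, dif_neg h, mul_zero]

/-- The dimension of the `j`-th homology of the augmented simplicial chain complex of `K`.
Degree `j` corresponds to the reduced homology group `H̃_{j-1}` of the realization of `K`. -/
noncomputable def hBetti (F : Type*) [Field F] (K : Finset (Finset ℕ)) : ℕ → ℕ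
  | 0 => Module.finrank F (Chain F K 0) - Module.finrank F (LinearMap.range (bdry F K 0))
  | j + 1 =>
      Module.finrank F (LinearMap.ker (bdry F K j)) -
        Module.finrank F (LinearMap.range (bdry F K (j + 1)))

/-- The reduced total Betti number `t̃b(K; F) = ∑ i dim H̃ i (K; F)` of (the geometric
realization of) `K`, with the convention `t̃b(∅; F) = 1` (coming from `β̃₋₁(∅) = 1`;
note that if `K` is nonempty and closed under subsets then `∅ ∈ K` and the augmented
chain complex accounts for `β̃₋₁` automatically). -/
noncomputable def rtb (F : Type*) [Field F] (K : Finset (Finset ℕ)) : ℕ :=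
  if K = ∅ then 1 else ∑ j ∈ Finset.range ((verts K).card + 1), hBetti F K j

/-- The full subcomplex `K|_J` of `K` on a vertex set `J`. -/
def restr (K : Finset (Finset ℕ)) (J : Finset ℕ) : Finset (Finset ℕ) :=
  K.filter (fun σ => σ ⊆ J)

/-- The total bigraded Betti number `D̃(K; F) = ∑_{J ⊆ V} t̃b(K|_J; F)`
with respect to a ground vertex set `V`. -/
noncomputable def Dtilde (F : Type*) [Field F] (V : Finset ℕ) (K : Finset (Finset ℕ)) : ℕ :=
  ∑ J ∈ V.powerset, rtb F (restr K J)


/-- The `k`-skeleton `Δ^[m]_(k)` of the full simplex on the vertex set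
`[m] = {0, 1, …, m-1}`: all subsets of cardinality at most `k + 1`. -/
def skel (m k : ℕ) : Finset (Finset ℕ) :=
  (Finset.range m).powerset.filter (fun σ => σ.card ≤ k + 1)

/-- The `k`-skeleton of the full simplex on `[m]` for an integer `k`
(so `k = -1` gives the empty complex `{∅}`). -/
def skelZ (m : ℕ) (k : ℤ) : Finset (Finset ℕ) :=
  (Finset.range m).powerset.filter (fun σ => (σ.card : ℤ) ≤ k + 1)

/-- `Δ^[m]_(k)⟨d⟩`: the union of the `k`-skeleton of the full simplex on `[m]`
with the single `d`-simplex `{0, 1, …, d}` and all its faces. -/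
def skelD (m k d : ℕ) : Finset (Finset ℕ) :=
  skel m k ∪ (Finset.range (d + 1)).powerset

/-- `K` and `L` are isomorphic simplicial complexes: some injection of the vertex
set of `K` maps the simplices of `K` exactly onto the simplices of `L`. -/
def SIso (K L : Finset (Finset ℕ)) : Prop :=
  ∃ f : ℕ → ℕ, Set.InjOn f ↑(verts K) ∧ L = K.image (fun σ => σ.image f)

/-- `g(m,d) = ∑_{j=d+1}^{m} C(m,j)·C(j-1,d)`. -/
def g (m d : ℕ) : ℕ := ∑ j ∈ Finset.Icc (d + 1) m, m.choose j * (j - 1).choose d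

/-- The join `K * L` of two simplicial complexes (on disjoint vertex sets). -/
def sJoin (K L : Finset (Finset ℕ)) : Finset (Finset ℕ) :=
  (K ×ˢ L).image fun p => p.1 ∪ p.2

/-- A `d`-dimensional simplicial complex `K` with `m` vertices is tight over `F` if
`D̃(K;F) = 2^{m-d-1}` (note `m - d - 1 = m - (d+1)` and `d + 1 = max σ∈K |σ|`),
where `D̃` is computed with respect to the vertex set of `K`. -/
def IsTight (F : Type*) [Field F] (K : Finset (Finset ℕ)) : Prop :=
  Dtilde F (verts K) K = 2 ^ ((verts K).card - K.sup Finset.card)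

/-- The link of a simplex `σ` in `K`. -/
def linkK (K : Finset (Finset ℕ)) (σ : Finset ℕ) : Finset (Finset ℕ) :=
  K.filter (fun τ => Disjoint τ σ ∧ τ ∪ σ ∈ K)

/-- `K` is pure: every maximal simplex has the maximum cardinality `dim K + 1`. -/
def IsPure (K : Finset (Finset ℕ)) : Prop :=
  ∀ σ ∈ K, (∀ τ ∈ K, σ ⊆ τ → σ = τ) → σ.card = K.sup Finset.card

/-- A near-cone (with apex vertex `0`): for every simplex `S` with `0 ∉ S` and every
`j ∈ S`, `(S \ j) ∪ {0}` is again a simplex. -/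
def IsNearCone (Δ : Finset (Finset ℕ)) : Prop :=
  ∀ S ∈ Δ, 0 ∉ S → ∀ j ∈ S, insert 0 (S.erase j) ∈ Δ

/-- `B(Δ) = {S ∈ Δ : S ∪ {0} ∉ Δ}` for a near-cone `Δ` with apex `0`. -/
def BSet (Δ : Finset (Finset ℕ)) : Finset (Finset ℕ) :=
  Δ.filter (fun S => insert 0 S ∉ Δ)

/-- A Sperner family of the finite set `X`: a family of subsets of `X`, no member
containing another member. -/
def IsSperner (X : Finset ℕ) (F : Finset (Finset ℕ)) : Prop :=
  (∀ A ∈ F, A ⊆ X) ∧ ∀ A ∈ F, ∀ B ∈ F, A ⊆ B → A = B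

/-- The geometric realization of `K` is disconnected: the vertex set splits into two
nonempty parts such that every simplex lies entirely in one of the parts. -/
def IsDisconn (K : Finset (Finset ℕ)) : Prop :=
  ∃ A B : Finset ℕ, A.Nonempty ∧ B.Nonempty ∧ Disjoint A B ∧ A ∪ B = verts K ∧
    ∀ σ ∈ K, σ ⊆ A ∨ σ ⊆ B

/-- The boundary `∂Δ^A` of the full simplex on the vertex set `A`: all proper subsets
of `A`.  (For `|A| = 1` this is the empty complex `{∅}`.) -/
def bdSimplex (A : Finset ℕ) : Finset (Finset ℕ) := A.powerset.erase A



section MySubadd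

open Finset Module LinearMap Submodule

variable (F : Type*) [Field F]

lemma my_mem_verts {K : Finset (Finset ℕ)} {σ : Finset ℕ} (hσ : σ ∈ K) {v : ℕ} (hv : v ∈ σ) :
    v ∈ verts K := (Finset.le_sup (f := id) hσ : σ ≤ verts K) hv

lemma my_card_le_verts {K : Finset (Finset ℕ)} {σ : Finset ℕ} (hσ : σ ∈ K) :
    σ.card ≤ (verts K).card :=
  Finset.card_le_card (Finset.le_sup (f := id) hσ)

lemma my_finrank_chain (K : Finset (Finset ℕ)) (j : ℕ) :
    Module.finrank F (Chain F K j) = (K.filter (fun σ => σ.card = j)).card := by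
  rw [Module.finrank_fintype_fun_eq_card, Fintype.card_coe]

lemma my_bdry_apply (K : Finset (Finset ℕ)) (j : ℕ) (c : Chain F K (j+1)) (τ) :
    bdry F K j c τ = ∑ v ∈ verts K,
      if h : v ∉ τ.1 ∧ insert v τ.1 ∈ K.filter (fun σ => σ.card = j + 1) then
        (-1 : F) ^ ((τ.1.filter (fun u => u < v)).card) * c ⟨insert v τ.1, h.2⟩
      else 0 := rfl

lemma my_sign_aux {τ : Finset ℕ} {v w : ℕ} (hv : v ∉ τ) (hlt : v < w) :
    ((insert v τ).filter (fun u => u < w)).card = (τ.filter (fun u => u < w)).card + 1 ∧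
    ((insert w τ).filter (fun u => u < v)).card = (τ.filter (fun u => u < v)).card := by
  constructor
  · rw [Finset.filter_insert, if_pos hlt,
      Finset.card_insert_of_notMem (fun hc => hv (Finset.mem_filter.mp hc).1)]
  · rw [Finset.filter_insert, if_neg (not_lt.mpr hlt.le)]

lemma my_sign {τ : Finset ℕ} {v w : ℕ} (hv : v ∉ τ) (hw : w ∉ τ) (hvw : v ≠ w) :
    (-1 : F) ^ ((τ.filter (fun u => u < v)).card) *
        (-1 : F) ^ (((insert v τ).filter (fun u => u < w)).card) +
      (-1 : F) ^ ((τ.filter (fun u => u < w)).card) *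
        (-1 : F) ^ (((insert w τ).filter (fun u => u < v)).card) = 0 := by
  rcases hvw.lt_or_gt with h | h
  · obtain ⟨h1, h2⟩ := my_sign_aux hv h
    rw [h1, h2, pow_succ]; ring
  · obtain ⟨h1, h2⟩ := my_sign_aux hw h
    rw [h1, h2, pow_succ]; ring

lemma my_bdry_bdry {K : Finset (Finset ℕ)} (hK : IsComplex K) (j : ℕ) :
    (bdry F K j).comp (bdry F K (j+1)) = 0 := by
  apply LinearMap.ext
  intro c
  funext τ
  show bdry F K j (bdry F K (j+1) c) τ = 0
  have hτK : τ.1 ∈ K := (Finset.mem_filter.mp τ.2).1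
  have hτc : τ.1.card = j := (Finset.mem_filter.mp τ.2).2
  set cc : Finset ℕ → F := fun S =>
    if hS : S ∈ K.filter (fun σ => σ.card = j + 2) then c ⟨S, hS⟩ else 0 with hcc
  set G : ℕ → ℕ → F := fun v w =>
    if _ : v ∉ τ.1 ∧ insert v τ.1 ∈ K.filter (fun σ => σ.card = j + 1) then
      (if _ : w ∉ insert v τ.1 ∧ insert w (insert v τ.1) ∈ K.filter (fun σ => σ.card = j + 2) then
        (-1 : F) ^ ((τ.1.filter (fun u => u < v)).card) *
          ((-1 : F) ^ (((insert v τ.1).filter (fun u => u < w)).card) *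
            cc (insert w (insert v τ.1)))
      else 0)
    else 0 with hG
  have hstep : bdry F K j (bdry F K (j+1) c) τ = ∑ v ∈ verts K, ∑ w ∈ verts K, G v w := by
    rw [my_bdry_apply]
    refine Finset.sum_congr rfl fun v _ => ?_
    by_cases h : v ∉ τ.1 ∧ insert v τ.1 ∈ K.filter (fun σ => σ.card = j + 1)
    · rw [dif_pos h, my_bdry_apply, Finset.mul_sum]
      refine Finset.sum_congr rfl fun w _ => ?_
      rw [hG]
      dsimp only
      rw [dif_pos h]
      by_cases h' : w ∉ insert v τ.1 ∧
          insert w (insert v τ.1) ∈ K.filter (fun σ => σ.card = j + 2)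
      · rw [dif_pos h', dif_pos h', hcc]
        dsimp only
        rw [dif_pos h'.2]
      · rw [dif_neg h', dif_neg h', mul_zero]
    · rw [dif_neg h]
      symm
      apply Finset.sum_eq_zero
      intro w _
      rw [hG]
      dsimp only
      rw [dif_neg h]
  have Gzero : ∀ v w, ¬(v ∉ τ.1 ∧ w ∉ τ.1 ∧ v ≠ w ∧ insert w (insert v τ.1) ∈ K) →
      G v w = 0 := by
    intro v w hc2
    rw [hG]
    dsimp only
    by_cases h : v ∉ τ.1 ∧ insert v τ.1 ∈ K.filter (fun σ => σ.card = j + 1)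
    · rw [dif_pos h, dif_neg]
      intro h'
      refine hc2 ⟨h.1, fun hw => h'.1 (Finset.mem_insert_of_mem hw), ?_,
        (Finset.mem_filter.mp h'.2).1⟩
      intro he
      exact h'.1 (by rw [← he]; exact Finset.mem_insert_self _ _)
    · rw [dif_neg h]
  have Gskew : ∀ v w, G v w + G w v = 0 := by
    intro v w
    by_cases hc2 : v ∉ τ.1 ∧ w ∉ τ.1 ∧ v ≠ w ∧ insert w (insert v τ.1) ∈ K
    · obtain ⟨hv, hw, hvw, hS⟩ := hc2
      have hSc : insert v (insert w τ.1) ∈ K := by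
        rw [Finset.insert_comm]; exact hS
      have hvK : insert v τ.1 ∈ K := hK _ hS _ (Finset.subset_insert _ _)
      have hwK : insert w τ.1 ∈ K := hK _ hSc _ (Finset.subset_insert _ _)
      have hwv : w ∉ insert v τ.1 := by
        simp only [Finset.mem_insert, not_or]; exact ⟨fun he => hvw he.symm, hw⟩
      have hvw' : v ∉ insert w τ.1 := by
        simp only [Finset.mem_insert, not_or]; exact ⟨fun he => hvw.symm he.symm, hv⟩
      have hvc : (insert v τ.1).card = j + 1 := by
        rw [Finset.card_insert_of_notMem hv, hτc]
      have hwc : (insert w τ.1).card = j + 1 := by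
        rw [Finset.card_insert_of_notMem hw, hτc]
      have hSc1 : (insert w (insert v τ.1)).card = j + 2 := by
        rw [Finset.card_insert_of_notMem hwv, hvc]
      have hSc2 : (insert v (insert w τ.1)).card = j + 2 := by
        rw [Finset.card_insert_of_notMem hvw', hwc]
      rw [hG]
      dsimp only
      rw [dif_pos ⟨hv, Finset.mem_filter.mpr ⟨hvK, hvc⟩⟩,
          dif_pos ⟨hwv, Finset.mem_filter.mpr ⟨hS, hSc1⟩⟩,
          dif_pos ⟨hw, Finset.mem_filter.mpr ⟨hwK, hwc⟩⟩,
          dif_pos ⟨hvw', Finset.mem_filter.mpr ⟨hSc, hSc2⟩⟩]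
      rw [Finset.insert_comm v w τ.1]
      have hsgn := my_sign F hv hw hvw
      linear_combination cc (insert w (insert v τ.1)) * hsgn
    · rw [Gzero v w hc2, Gzero w v, add_zero]
      intro ⟨a, b, cne, d⟩
      exact hc2 ⟨b, a, cne.symm, by rw [Finset.insert_comm]; exact d⟩
  rw [hstep, ← Finset.sum_product']
  refine Finset.sum_involution (fun p _ => p.swap) ?_ ?_ ?_ ?_
  · intro p _
    exact Gskew p.1 p.2
  · intro p _ hne heq
    have h12 : p.2 = p.1 := congrArg Prod.fst heq
    exact hne (by rw [h12]; exact Gzero p.1 p.1 (fun hcon => hcon.2.2.1 rfl))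
  · intro p hp
    rw [Finset.mem_product] at hp ⊢
    exact ⟨hp.2, hp.1⟩
  · intro p _
    rfl

noncomputable def chainExt {K K' : Finset (Finset ℕ)} (h : K ⊆ K') (j : ℕ) :
    Chain F K j →ₗ[F] Chain F K' j where
  toFun c := fun σ =>
    if hσ : σ.1 ∈ K.filter (fun σ => σ.card = j) then c ⟨σ.1, hσ⟩ else 0
  map_add' c d := by
    funext σ
    show _ = (_ : F) + (_ : F)
    dsimp only
    by_cases hσ : σ.1 ∈ K.filter (fun σ => σ.card = j)
    · rw [dif_pos hσ, dif_pos hσ, dif_pos hσ]; rfl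
    · rw [dif_neg hσ, dif_neg hσ, dif_neg hσ, add_zero]
  map_smul' a c := by
    funext σ
    show _ = a * _
    dsimp only
    by_cases hσ : σ.1 ∈ K.filter (fun σ => σ.card = j)
    · rw [dif_pos hσ, dif_pos hσ]; rfl
    · rw [dif_neg hσ, dif_neg hσ, mul_zero]

lemma chainExt_apply {K K' : Finset (Finset ℕ)} (h : K ⊆ K') (j : ℕ) (c : Chain F K j) (σ) :
    chainExt F h j c σ =
      if hσ : σ.1 ∈ K.filter (fun σ => σ.card = j) then c ⟨σ.1, hσ⟩ else 0 := rfl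

lemma chainExt_injective {K K' : Finset (Finset ℕ)} (h : K ⊆ K') (j : ℕ) :
    Function.Injective (chainExt F h j) := by
  intro c d he
  funext τ
  have h2 : τ.1 ∈ K'.filter (fun σ => σ.card = j) :=
    Finset.mem_filter.mpr ⟨h (Finset.mem_filter.mp τ.2).1, (Finset.mem_filter.mp τ.2).2⟩
  have h3 := congrFun he ⟨τ.1, h2⟩
  rw [chainExt_apply, chainExt_apply, dif_pos τ.2, dif_pos τ.2] at h3
  exact h3

lemma mem_range_chainExt_iff {K K' : Finset (Finset ℕ)} (h : K ⊆ K') (j : ℕ)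
    (c : Chain F K' j) :
    c ∈ LinearMap.range (chainExt F h j) ↔
      ∀ σ : {σ // σ ∈ K'.filter (fun σ => σ.card = j)}, σ.1 ∉ K → c σ = 0 := by
  constructor
  · rintro ⟨d, rfl⟩ σ hσ
    rw [chainExt_apply, dif_neg (fun hc => hσ (Finset.mem_filter.mp hc).1)]
  · intro hc
    refine ⟨fun τ => c ⟨τ.1, Finset.mem_filter.mpr
      ⟨h (Finset.mem_filter.mp τ.2).1, (Finset.mem_filter.mp τ.2).2⟩⟩, ?_⟩
    funext σ
    rw [chainExt_apply]
    by_cases hσ : σ.1 ∈ K.filter (fun σ => σ.card = j)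
    · rw [dif_pos hσ]
    · rw [dif_neg hσ]
      exact (hc σ (fun hmem => hσ (Finset.mem_filter.mpr
        ⟨hmem, (Finset.mem_filter.mp σ.2).2⟩))).symm

lemma chainExt_bdry {K K' : Finset (Finset ℕ)} (hK : IsComplex K) (h : K ⊆ K') (j : ℕ) :
    (bdry F K' j).comp (chainExt F h (j+1)) = (chainExt F h j).comp (bdry F K j) := by
  apply LinearMap.ext
  intro c
  funext τ
  show bdry F K' j (chainExt F h (j+1) c) τ = chainExt F h j (bdry F K j c) τ
  rw [chainExt_apply]
  by_cases hτ : τ.1 ∈ K.filter (fun σ => σ.card = j)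
  · rw [dif_pos hτ, my_bdry_apply, my_bdry_apply]
    rw [← Finset.sum_subset (Finset.le_iff_subset.mp (Finset.sup_mono h))]
    · refine Finset.sum_congr rfl fun v hv => ?_
      by_cases hg : v ∉ τ.1 ∧ insert v τ.1 ∈ K.filter (fun σ => σ.card = j + 1)
      · have hg' : v ∉ τ.1 ∧ insert v τ.1 ∈ K'.filter (fun σ => σ.card = j + 1) :=
          ⟨hg.1, Finset.mem_filter.mpr ⟨h (Finset.mem_filter.mp hg.2).1,
            (Finset.mem_filter.mp hg.2).2⟩⟩
        rw [dif_pos hg', dif_pos hg, chainExt_apply, dif_pos hg.2]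
      · by_cases hf : v ∉ τ.1 ∧ insert v τ.1 ∈ K'.filter (fun σ => σ.card = j + 1)
        · rw [dif_pos hf, dif_neg hg, chainExt_apply, dif_neg, mul_zero]
          intro hmem
          exact hg ⟨hf.1, hmem⟩
        · rw [dif_neg hf, dif_neg hg]
    · intro v _ hvK
      by_cases hf : v ∉ τ.1 ∧ insert v τ.1 ∈ K'.filter (fun σ => σ.card = j + 1)
      · rw [dif_pos hf, chainExt_apply, dif_neg, mul_zero]
        intro hmem
        exact hvK (my_mem_verts (Finset.mem_filter.mp hmem).1 (Finset.mem_insert_self _ _))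
      · rw [dif_neg hf]
  · rw [dif_neg hτ, my_bdry_apply]
    apply Finset.sum_eq_zero
    intro v _
    by_cases hf : v ∉ τ.1 ∧ insert v τ.1 ∈ K'.filter (fun σ => σ.card = j + 1)
    · rw [dif_pos hf, chainExt_apply, dif_neg, mul_zero]
      intro hmem
      refine hτ (Finset.mem_filter.mpr ⟨hK _ (Finset.mem_filter.mp hmem).1 _
        (Finset.subset_insert _ _), (Finset.mem_filter.mp τ.2).2⟩)
    · rw [dif_neg hf]

lemma my_finrank_map_add_inf_ker {V W : Type*} [AddCommGroup V] [Module F V]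
    [AddCommGroup W] [Module F W] [FiniteDimensional F V]
    (f : V →ₗ[F] W) (P : Submodule F V) :
    Module.finrank F (P.map f) + Module.finrank F ↥(LinearMap.ker f ⊓ P)
      = Module.finrank F P := by
  have h1 := LinearMap.finrank_range_add_finrank_ker (f.domRestrict P)
  rw [LinearMap.range_domRestrict] at h1
  have h2 : LinearMap.ker (f.domRestrict P)
      = Submodule.comap P.subtype (LinearMap.ker f ⊓ P) := by
    rw [LinearMap.ker_domRestrict]
    ext x
    simp [x.2]
  rw [h2, (Submodule.comapSubtypeEquivOfLe (inf_le_right :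
    LinearMap.ker f ⊓ P ≤ P)).finrank_eq] at h1
  exact h1

lemma my_supermod {V W : Type*} [AddCommGroup V] [Module F V]
    [AddCommGroup W] [Module F W] [FiniteDimensional F V]
    (f : V →ₗ[F] W) (A B : Submodule F V) :
    Module.finrank F ((A ⊓ B).map f) + Module.finrank F ((A ⊔ B).map f)
      ≤ Module.finrank F (A.map f) + Module.finrank F (B.map f) := by
  have rkA := my_finrank_map_add_inf_ker F f A
  have rkB := my_finrank_map_add_inf_ker F f B
  have rkI := my_finrank_map_add_inf_ker F f (A ⊓ B)
  have rkS := my_finrank_map_add_inf_ker F f (A ⊔ B)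
  have hdim := Submodule.finrank_sup_add_finrank_inf_eq A B
  have hker : Module.finrank F ↥(LinearMap.ker f ⊓ A)
        + Module.finrank F ↥(LinearMap.ker f ⊓ B)
      ≤ Module.finrank F ↥(LinearMap.ker f ⊓ (A ⊓ B))
        + Module.finrank F ↥(LinearMap.ker f ⊓ (A ⊔ B)) := by
    have e1 : (LinearMap.ker f ⊓ A) ⊓ (LinearMap.ker f ⊓ B)
        = LinearMap.ker f ⊓ (A ⊓ B) := (inf_inf_distrib_left _ _ _).symm
    have e2 : (LinearMap.ker f ⊓ A) ⊔ (LinearMap.ker f ⊓ B)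
        ≤ LinearMap.ker f ⊓ (A ⊔ B) :=
      sup_le (inf_le_inf_left _ le_sup_left) (inf_le_inf_left _ le_sup_right)
    have h3 := Submodule.finrank_sup_add_finrank_inf_eq
      (LinearMap.ker f ⊓ A) (LinearMap.ker f ⊓ B)
    have h4 := Submodule.finrank_mono e2
    rw [e1] at h3
    omega
  omega

lemma my_filter_card_zero (X : Finset (Finset ℕ)) (j : ℕ) (h : (verts X).card < j) :
    (X.filter (fun σ => σ.card = j)).card = 0 := by
  rw [Finset.card_eq_zero, Finset.filter_eq_empty_iff]
  intro σ hσ hc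
  have := my_card_le_verts hσ
  omega

lemma my_hBetti_zero (X : Finset (Finset ℕ)) (j : ℕ) (h : (verts X).card < j) :
    hBetti F X j = 0 := by
  cases j with
  | zero => omega
  | succ j' =>
    have h1 : Module.finrank F ↥(LinearMap.ker (bdry F X j'))
        ≤ Module.finrank F (Chain F X (j' + 1)) := Submodule.finrank_le _
    rw [my_finrank_chain, my_filter_card_zero X (j' + 1) h] at h1
    have h2 : hBetti F X (j' + 1) = Module.finrank F ↥(LinearMap.ker (bdry F X j'))
        - Module.finrank F ↥(LinearMap.range (bdry F X (j' + 1))) := rfl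
    omega

lemma my_rnk_zero (X : Finset (Finset ℕ)) (j : ℕ) (h : (verts X).card ≤ j) :
    Module.finrank F ↥(LinearMap.range (bdry F X j)) = 0 := by
  have h1 := LinearMap.finrank_range_le (bdry F X j)
  rw [my_finrank_chain, my_filter_card_zero X (j + 1) (by omega)] at h1
  omega

lemma my_rtb_eq (m : ℕ) (X : Finset (Finset ℕ)) (hX : IsComplex X) (hne : X ≠ ∅)
    (hXm : X ⊆ (Finset.range m).powerset) :
    rtb F X + 2 * ∑ j ∈ Finset.range (m + 2),
        Module.finrank F ↥(LinearMap.range (bdry F X j))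
      = ∑ j ∈ Finset.range (m + 2), (X.filter (fun σ => σ.card = j)).card := by
  have hvm : (verts X).card ≤ m := by
    have hsub : verts X ⊆ Finset.range m :=
      Finset.le_iff_subset.mp (Finset.sup_le (fun σ hσ =>
        Finset.le_iff_subset.mpr (Finset.mem_powerset.mp (hXm hσ))))
    calc (verts X).card ≤ (Finset.range m).card := Finset.card_le_card hsub
      _ = m := Finset.card_range m
  have hrtb : rtb F X = ∑ j ∈ Finset.range (m + 2), hBetti F X j := by
    rw [rtb, if_neg hne]
    apply Finset.sum_subset (Finset.range_subset_range.mpr (by omega))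
    intro j hj hj'
    rw [Finset.mem_range] at hj hj'
    exact my_hBetti_zero F X j (by omega)
  rw [hrtb]
  have h0 : hBetti F X 0 + Module.finrank F ↥(LinearMap.range (bdry F X 0))
      = Module.finrank F (Chain F X 0) := by
    have hle : Module.finrank F ↥(LinearMap.range (bdry F X 0))
        ≤ Module.finrank F (Chain F X 0) := Submodule.finrank_le _
    have hdef : hBetti F X 0 = Module.finrank F (Chain F X 0)
        - Module.finrank F ↥(LinearMap.range (bdry F X 0)) := rfl
    omega
  have hs : ∀ j : ℕ, hBetti F X (j + 1) + Module.finrank F ↥(LinearMap.range (bdry F X j))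
        + Module.finrank F ↥(LinearMap.range (bdry F X (j + 1)))
      = Module.finrank F (Chain F X (j + 1)) := by
    intro j
    have h1 := LinearMap.finrank_range_add_finrank_ker (bdry F X j)
    have h2 : LinearMap.range (bdry F X (j + 1)) ≤ LinearMap.ker (bdry F X j) :=
      LinearMap.range_le_ker_iff.mpr (my_bdry_bdry F hX j)
    have h3 := Submodule.finrank_mono h2
    have h4 : hBetti F X (j + 1) = Module.finrank F ↥(LinearMap.ker (bdry F X j))
        - Module.finrank F ↥(LinearMap.range (bdry F X (j + 1))) := rfl
    omega
  have key : ∀ n : ℕ, ∑ j ∈ Finset.range (n + 1), hBetti F X j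
        + 2 * ∑ j ∈ Finset.range (n + 1), Module.finrank F ↥(LinearMap.range (bdry F X j))
      = ∑ j ∈ Finset.range (n + 1), Module.finrank F (Chain F X j)
        + Module.finrank F ↥(LinearMap.range (bdry F X n)) := by
    intro n
    induction n with
    | zero => simp only [zero_add, Finset.sum_range_one]; omega
    | succ n ih =>
      rw [Finset.sum_range_succ, Finset.sum_range_succ
        (f := fun j => Module.finrank F ↥(LinearMap.range (bdry F X j))),
        Finset.sum_range_succ (f := fun j => Module.finrank F (Chain F X j))]
      have := hs n
      omega
  have hkey := key (m + 1)

  have hz : Module.finrank F ↥(LinearMap.range (bdry F X (m + 1))) = 0 :=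
    my_rnk_zero F X (m + 1) (by omega)
  have hC : ∑ j ∈ Finset.range (m + 1 + 1), Module.finrank F (Chain F X j)
      = ∑ j ∈ Finset.range (m + 1 + 1), (X.filter (fun σ => σ.card = j)).card :=
    Finset.sum_congr rfl fun j _ => my_finrank_chain F X j
  rw [show m + 2 = m + 1 + 1 from rfl]
  omega

lemma my_rank_supermod (K L : Finset (Finset ℕ)) (hK : IsComplex K) (hL : IsComplex L)
    (j : ℕ) :
    Module.finrank F ↥(LinearMap.range (bdry F (K ∩ L) j))
        + Module.finrank F ↥(LinearMap.range (bdry F (K ∪ L) j))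
      ≤ Module.finrank F ↥(LinearMap.range (bdry F K j))
        + Module.finrank F ↥(LinearMap.range (bdry F L j)) := by
  have hKU : K ⊆ K ∪ L := Finset.subset_union_left
  have hLU : L ⊆ K ∪ L := Finset.subset_union_right
  have hIU : K ∩ L ⊆ K ∪ L := Finset.inter_subset_left.trans hKU
  have hUU : K ∪ L ⊆ K ∪ L := Finset.Subset.refl _
  have hI : IsComplex (K ∩ L) := by
    intro σ hσ τ hτ
    rw [Finset.mem_inter] at hσ ⊢
    exact ⟨hK _ hσ.1 _ hτ, hL _ hσ.2 _ hτ⟩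
  have hU : IsComplex (K ∪ L) := by
    intro σ hσ τ hτ
    rw [Finset.mem_union] at hσ ⊢
    rcases hσ with hσ | hσ
    · exact Or.inl (hK _ hσ _ hτ)
    · exact Or.inr (hL _ hσ _ hτ)
  set f := bdry F (K ∪ L) j with hf
  have hmap : ∀ (X : Finset (Finset ℕ)) (hXc : IsComplex X) (hXU : X ⊆ K ∪ L),
      Module.finrank F ↥((LinearMap.range (chainExt F hXU (j + 1))).map f)
        = Module.finrank F ↥(LinearMap.range (bdry F X j)) := by
    intro X hXc hXU
    have hcomm := chainExt_bdry F hXc hXU j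
    rw [← LinearMap.range_comp, hcomm, LinearMap.range_comp]
    exact (Submodule.equivMapOfInjective _ (chainExt_injective F hXU j) _).finrank_eq.symm
  set A := LinearMap.range (chainExt F hKU (j + 1)) with hA
  set B := LinearMap.range (chainExt F hLU (j + 1)) with hB
  have hinf : A ⊓ B = LinearMap.range (chainExt F hIU (j + 1)) := by
    ext c
    rw [Submodule.mem_inf, hA, hB, mem_range_chainExt_iff, mem_range_chainExt_iff,
      mem_range_chainExt_iff]
    constructor
    · intro ⟨h1, h2⟩ σ hσ
      by_cases hKm : σ.1 ∈ K
      · exact h2 σ (fun hLm => hσ (Finset.mem_inter.mpr ⟨hKm, hLm⟩))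
      · exact h1 σ hKm
    · intro h1
      constructor
      · intro σ hσ
        exact h1 σ (fun hm => hσ (Finset.mem_inter.mp hm).1)
      · intro σ hσ
        exact h1 σ (fun hm => hσ (Finset.mem_inter.mp hm).2)
  have hsup : A ⊔ B = ⊤ := by
    rw [eq_top_iff]
    intro c _
    set a : Chain F (K ∪ L) (j + 1) := fun σ => if σ.1 ∈ K then c σ else 0 with ha
    set b : Chain F (K ∪ L) (j + 1) := fun σ => if σ.1 ∈ K then 0 else c σ with hb
    have hab : a + b = c := by
      funext σ
      show a σ + b σ = c σ
      rw [ha, hb]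
      dsimp only
      by_cases hm : σ.1 ∈ K
      · rw [if_pos hm, if_pos hm, add_zero]
      · rw [if_neg hm, if_neg hm, zero_add]
    refine Submodule.mem_sup.mpr ⟨a, ?_, b, ?_, hab⟩
    · rw [hA, mem_range_chainExt_iff]
      intro σ hσ
      rw [ha]
      exact if_neg hσ
    · rw [hB, mem_range_chainExt_iff]
      intro σ hσ
      rw [hb]
      have hm : σ.1 ∈ K := by
        have := (Finset.mem_filter.mp σ.2).1
        rw [Finset.mem_union] at this
        tauto
      exact if_pos hm
  have habs := my_supermod F f A B
  rw [hinf, hsup] at habs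
  rw [hmap (K ∩ L) hI hIU, hmap K hK hKU, hmap L hL hLU] at habs
  have htop : (⊤ : Submodule F (Chain F (K ∪ L) (j + 1))).map f
      = LinearMap.range f := Submodule.map_top f
  rw [htop] at habs
  have hrange : LinearMap.range f = LinearMap.range (bdry F (K ∪ L) j) := rfl
  rw [hrange] at habs
  exact habs

end MySubadd

/-- For subcomplexes `K`, `L` of the full simplex on `[m]`,
`t̃b(K) + t̃b(L) ≤ t̃b(K ∩ L) + t̃b(K ∪ L)`. -/
theorem stmt1 (F : Type*) [Field F] (m : ℕ) (K L : Finset (Finset ℕ))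
    (hK : IsComplex K) (hL : IsComplex L)
    (hKs : K ⊆ (Finset.range m).powerset) (hLs : L ⊆ (Finset.range m).powerset) :
    rtb F K + rtb F L ≤ rtb F (K ∩ L) + rtb F (K ∪ L) := by
  classical
  by_cases hKe : K = ∅
  · subst hKe
    rw [Finset.empty_inter, Finset.empty_union]
  · by_cases hLe : L = ∅
    · subst hLe
      rw [Finset.inter_empty, Finset.union_empty, add_comm (rtb F K), add_comm (rtb F ∅)]
    · have hEK : ∅ ∈ K := by
        obtain ⟨σ, hσ⟩ := Finset.nonempty_iff_ne_empty.mpr hKe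
        exact hK σ hσ ∅ (Finset.empty_subset σ)
      have hEL : ∅ ∈ L := by
        obtain ⟨σ, hσ⟩ := Finset.nonempty_iff_ne_empty.mpr hLe
        exact hL σ hσ ∅ (Finset.empty_subset σ)
      have hIne : K ∩ L ≠ ∅ := Finset.nonempty_iff_ne_empty.mp
        ⟨∅, Finset.mem_inter.mpr ⟨hEK, hEL⟩⟩
      have hUne : K ∪ L ≠ ∅ := Finset.nonempty_iff_ne_empty.mp
        ⟨∅, Finset.mem_union.mpr (Or.inl hEK)⟩
      have hI : IsComplex (K ∩ L) := by
        intro σ hσ τ hτ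
        rw [Finset.mem_inter] at hσ ⊢
        exact ⟨hK _ hσ.1 _ hτ, hL _ hσ.2 _ hτ⟩
      have hU : IsComplex (K ∪ L) := by
        intro σ hσ τ hτ
        rw [Finset.mem_union] at hσ ⊢
        rcases hσ with hσ | hσ
        · exact Or.inl (hK _ hσ _ hτ)
        · exact Or.inr (hL _ hσ _ hτ)
      have hIs : K ∩ L ⊆ (Finset.range m).powerset := Finset.inter_subset_left.trans hKs
      have hUs : K ∪ L ⊆ (Finset.range m).powerset := Finset.union_subset hKs hLs
      have e1 := my_rtb_eq F m K hK hKe hKs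
      have e2 := my_rtb_eq F m L hL hLe hLs
      have e3 := my_rtb_eq F m (K ∩ L) hI hIne hIs
      have e4 := my_rtb_eq F m (K ∪ L) hU hUne hUs
      have eC : ∑ j ∈ Finset.range (m + 2), (K.filter (fun σ => σ.card = j)).card
            + ∑ j ∈ Finset.range (m + 2), (L.filter (fun σ => σ.card = j)).card
          = ∑ j ∈ Finset.range (m + 2), ((K ∩ L).filter (fun σ => σ.card = j)).card
            + ∑ j ∈ Finset.range (m + 2), ((K ∪ L).filter (fun σ => σ.card = j)).card := by
        rw [← Finset.sum_add_distrib, ← Finset.sum_add_distrib]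
        refine Finset.sum_congr rfl fun j _ => ?_
        rw [Finset.filter_inter_distrib, Finset.filter_union]
        exact (Finset.card_inter_add_card_union _ _).symm
      have eR : ∑ j ∈ Finset.range (m + 2),
              Module.finrank F ↥(LinearMap.range (bdry F (K ∩ L) j))
            + ∑ j ∈ Finset.range (m + 2),
              Module.finrank F ↥(LinearMap.range (bdry F (K ∪ L) j))
          ≤ ∑ j ∈ Finset.range (m + 2),
              Module.finrank F ↥(LinearMap.range (bdry F K j))
            + ∑ j ∈ Finset.range (m + 2),
              Module.finrank F ↥(LinearMap.range (bdry F L j)) := by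
        rw [← Finset.sum_add_distrib, ← Finset.sum_add_distrib]
        exact Finset.sum_le_sum fun j _ => my_rank_supermod F K L hK hL j
      omega
end

section
/- Let m ≥ 2, d ≥ 1, and let 𝓕 be a Sperner family of {2,…,m}. Then the following are equivalent: (i) there exists a d-dimensional near-cone Δ with vertex set contained in [m] such that B(Δ) = 𝓕; (ii) there exists a d-element subset {i_1,…,i_d} ⊆ {2,…,m} such that no subset of {i_1,…,i_d} belongs to 𝓕 and every member of 𝓕 has cardinality at most d+1. -/
/-- A Sperner family `𝓕` of `[m] \ {apex}` arises as `B(Δ)` of a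
`d`-dimensional near-cone `Δ` with vertex set contained in `[m]` iff there is a
`d`-element subset of `[m] \ {apex}` none of whose subsets lies in `𝓕`, and every member
of `𝓕` has cardinality at most `d + 1`. (Vertices are `0, …, m-1`, with apex `0`.) -/
theorem stmt6 (m d : ℕ) (hm : 2 ≤ m) (hd : 1 ≤ d) (F : Finset (Finset ℕ))
    (hF : IsSperner ((Finset.range m).erase 0) F) :
    (∃ Δ : Finset (Finset ℕ), IsComplex Δ ∧ IsNearCone Δ ∧ verts Δ ⊆ Finset.range m ∧
        Δ.sup Finset.card = d + 1 ∧ BSet Δ = F) ↔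
      (∃ I : Finset ℕ, I ⊆ (Finset.range m).erase 0 ∧ I.card = d ∧
        (∀ τ ⊆ I, τ ∉ F) ∧ ∀ S ∈ F, S.card ≤ d + 1) := by
  classical
  obtain ⟨hFsub, hFsp⟩ := hF
  have hF0 : ∀ S ∈ F, 0 ∉ S ∧ S ⊆ Finset.range m := by
    intro S hS
    constructor
    · intro h0
      exact absurd (hFsub S hS h0) (by simp)
    · intro x hx
      exact Finset.mem_of_mem_erase (hFsub S hS hx)
  constructor
  · rintro ⟨Δ, hcx, hnc, hv, hsup, hB⟩
    have hΔne : Δ.Nonempty := by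
      by_contra h
      rw [Finset.not_nonempty_iff_eq_empty] at h
      simp [h] at hsup
    obtain ⟨σ, hσΔ, hσc⟩ := Finset.exists_mem_eq_sup Δ hΔne Finset.card
    have hσcard : σ.card = d + 1 := by rw [← hσc, hsup]
    have key : ∃ I : Finset ℕ, 0 ∉ I ∧ I.card = d ∧ insert 0 I ∈ Δ := by
      by_cases h0 : 0 ∈ σ
      · refine ⟨σ.erase 0, Finset.notMem_erase _ _, ?_, ?_⟩
        · rw [Finset.card_erase_of_mem h0, hσcard]
          omega
        · rwa [Finset.insert_erase h0]
      · obtain ⟨j, hj⟩ : σ.Nonempty := Finset.card_pos.mp (by omega)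
        refine ⟨σ.erase j, fun h => h0 (Finset.mem_of_mem_erase h), ?_,
          hnc σ hσΔ h0 j hj⟩
        rw [Finset.card_erase_of_mem hj, hσcard]
        omega
    obtain ⟨I, hI0, hIc, hIΔ⟩ := key
    have hsubV : insert 0 I ⊆ verts Δ := Finset.le_sup (f := id) hIΔ
    refine ⟨I, ?_, hIc, ?_, ?_⟩
    · intro x hx
      rw [Finset.mem_erase]
      refine ⟨fun h => hI0 (h ▸ hx), hv (hsubV (Finset.mem_insert_of_mem hx))⟩
    · intro τ hτ hτF
      rw [← hB] at hτF
      simp only [BSet, Finset.mem_filter] at hτF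
      exact hτF.2 (hcx _ hIΔ _ (Finset.insert_subset_insert _ hτ))
    · intro S hS
      rw [← hB] at hS
      simp only [BSet, Finset.mem_filter] at hS
      have := Finset.le_sup (f := Finset.card) hS.1
      omega
  · rintro ⟨I, hIsub, hIcard, hInoF, hFcard⟩
    have h0I : 0 ∉ I := fun h => absurd (hIsub h) (by simp)
    have hIr : I ⊆ Finset.range m := fun x hx => Finset.mem_of_mem_erase (hIsub hx)
    set Q : Finset ℕ → Prop := fun ρ => ρ ⊆ I ∨ ∃ S ∈ F, ρ ⊆ S with hQ
    have hQr : ∀ ρ, Q ρ → 0 ∉ ρ ∧ ρ ⊆ Finset.range m := by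
      rintro ρ (h | ⟨S, hS, h⟩)
      · exact ⟨fun h0 => h0I (h h0), h.trans hIr⟩
      · exact ⟨fun h0 => (hF0 S hS).1 (h h0), h.trans (hF0 S hS).2⟩
    have hQdown : ∀ ρ τ, Q ρ → τ ⊆ ρ → Q τ := by
      rintro ρ τ (h | ⟨S, hS, h⟩) hsub
      · exact Or.inl (hsub.trans h)
      · exact Or.inr ⟨S, hS, hsub.trans h⟩
    have hkey : ∀ ρ τ, Q ρ → τ ⊆ ρ → τ ∈ F → ρ = τ := by
      rintro ρ τ (h | ⟨S, hS, h⟩) hsub hτF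
      · exact absurd hτF (hInoF τ (hsub.trans h))
      · have hτS : τ = S := hFsp τ hτF S hS (hsub.trans h)
        exact Finset.Subset.antisymm (hτS ▸ h) hsub
    set Δ : Finset (Finset ℕ) := (Finset.range m).powerset.filter
      (fun τ => (0 ∉ τ ∧ Q τ) ∨ (0 ∈ τ ∧ Q (τ.erase 0) ∧ τ.erase 0 ∉ F)) with hΔdef
    have hmem : ∀ τ, τ ∈ Δ ↔
        ((0 ∉ τ ∧ Q τ) ∨ (0 ∈ τ ∧ Q (τ.erase 0) ∧ τ.erase 0 ∉ F)) := by
      intro τ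
      rw [hΔdef, Finset.mem_filter, Finset.mem_powerset]
      constructor
      · exact fun h => h.2
      · rintro (⟨h0, hQτ⟩ | ⟨h0, hQτ, hnF⟩)
        · exact ⟨(hQr τ hQτ).2, Or.inl ⟨h0, hQτ⟩⟩
        · refine ⟨?_, Or.inr ⟨h0, hQτ, hnF⟩⟩
          intro x hx
          by_cases hx0 : x = 0
          · subst hx0; exact Finset.mem_range.mpr (by omega)
          · exact (hQr _ hQτ).2 (Finset.mem_erase.mpr ⟨hx0, hx⟩)
    have hmemB : ∀ ρ, 0 ∉ ρ → Q ρ → ρ ∈ Δ := by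
      intro ρ h0 hQρ
      exact (hmem ρ).mpr (Or.inl ⟨h0, hQρ⟩)
    have hmemC : ∀ ρ, 0 ∉ ρ → Q ρ → ρ ∉ F → insert 0 ρ ∈ Δ := by
      intro ρ h0 hQρ hnF
      refine (hmem _).mpr (Or.inr ⟨Finset.mem_insert_self _ _, ?_, ?_⟩) <;>
        rw [Finset.erase_insert h0] <;> assumption
    refine ⟨Δ, ?_, ?_, ?_, ?_, ?_⟩
    · -- IsComplex
      intro σ hσ τ hτ
      rw [hmem] at hσ
      rcases hσ with ⟨h0σ, hQσ⟩ | ⟨h0σ, hQσ, hnF⟩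
      · exact hmemB τ (fun h => h0σ (hτ h)) (hQdown _ _ hQσ hτ)
      · by_cases h0τ : 0 ∈ τ
        · have hsub : τ.erase 0 ⊆ σ.erase 0 := Finset.erase_subset_erase _ hτ
          refine (hmem τ).mpr (Or.inr ⟨h0τ, hQdown _ _ hQσ hsub, fun hin => ?_⟩)
          exact hnF (hkey _ _ hQσ hsub hin ▸ hin)
        · have hsub : τ ⊆ σ.erase 0 := Finset.subset_erase.mpr ⟨hτ, h0τ⟩
          exact hmemB τ h0τ (hQdown _ _ hQσ hsub)
    · -- IsNearCone
      intro S hS h0S j hj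
      rw [hmem] at hS
      rcases hS with ⟨_, hQS⟩ | ⟨h0, _, _⟩
      · refine hmemC _ (fun h => h0S (Finset.mem_of_mem_erase h))
          (hQdown _ _ hQS (Finset.erase_subset _ _)) (fun hin => ?_)
        have := hkey S (S.erase j) hQS (Finset.erase_subset _ _) hin
        exact (Finset.notMem_erase j S) (this ▸ hj)
      · exact absurd h0 h0S
    · -- verts ⊆ range m
      show Δ.sup id ≤ Finset.range m
      refine Finset.sup_le fun σ hσ => ?_
      rw [hΔdef, Finset.mem_filter, Finset.mem_powerset] at hσ
      exact hσ.1
    · -- sup card = d + 1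
      have hIΔ : insert 0 I ∈ Δ := hmemC I h0I (Or.inl Finset.Subset.rfl)
        (hInoF I Finset.Subset.rfl)
      refine le_antisymm (Finset.sup_le fun σ hσ => ?_) ?_
      · rw [hmem] at hσ
        rcases hσ with ⟨h0σ, hQσ⟩ | ⟨h0σ, hQσ, hnF⟩
        · rcases hQσ with h | ⟨S, hS, h⟩
          · have := Finset.card_le_card h
            omega
          · have := Finset.card_le_card h
            have := hFcard S hS
            omega
        · have hec : (σ.erase 0).card ≤ d := by
            rcases hQσ with h | ⟨S, hS, h⟩
            · have := Finset.card_le_card h; omega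
            · have hne : σ.erase 0 ≠ S := fun he => hnF (he ▸ hS)
              have hss : σ.erase 0 ⊂ S := Finset.ssubset_iff_subset_ne.mpr ⟨h, hne⟩
              have := Finset.card_lt_card hss
              have := hFcard S hS
              omega
          have := Finset.card_erase_of_mem h0σ
          have : 1 ≤ σ.card := Finset.card_pos.mpr ⟨0, h0σ⟩
          have := Finset.card_erase_of_mem h0σ
          omega
      · have : (insert 0 I).card = d + 1 := by
          rw [Finset.card_insert_of_notMem h0I, hIcard]
        exact this ▸ Finset.le_sup (f := Finset.card) hIΔ
    · -- BSet Δ = F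
      ext τ
      simp only [BSet, Finset.mem_filter]
      constructor
      · rintro ⟨hτΔ, hins⟩
        rw [hmem] at hτΔ
        rcases hτΔ with ⟨h0τ, hQτ⟩ | ⟨h0τ, _, _⟩
        · by_contra hnF
          exact hins (hmemC τ h0τ hQτ hnF)
        · exact absurd ((Finset.insert_eq_self.mpr h0τ).symm ▸ hins :
            τ ∉ Δ) (fun h => h ((hmem τ).mpr (Or.inr ⟨h0τ, ‹_›, ‹_›⟩)))
      · intro hτF
        have h0τ : 0 ∉ τ := (hF0 τ hτF).1
        refine ⟨hmemB τ h0τ (Or.inr ⟨τ, hτF, Finset.Subset.rfl⟩), fun hin => ?_⟩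
        rw [hmem] at hin
        rcases hin with ⟨h0, _⟩ | ⟨_, _, hnF⟩
        · exact h0 (Finset.mem_insert_self _ _)
        · exact hnF (by rwa [Finset.erase_insert h0τ])
end

section
/- For any two simplicial complexes K and L with vertex set [m] and any field F, one has D̃(K;F) + D̃(L;F) ≤ D̃(K∩L;F) + D̃(K∪L;F), where all total bigraded Betti numbers are computed with respect to the ground set [m]. -/
/-! For a nonempty complex `K`, rank–nullity in the augmented chain complex gives
`t̃b(K) + 2 ∑ⱼ rank ∂ⱼ = |K|`. Face counts are modular, `|K| + |L| = |K ∩ L| + |K ∪ L|`, and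
boundary ranks are submodular: extending chains by zero embeds every chain group into the
functions on finite sets, where one boundary operator `∂` restricts to the boundary of each
complex; there `∂ C(K ∩ L) ⊆ ∂ C(K) ∩ ∂ C(L)` and `∂ C(K ∪ L) ⊆ ∂ C(K) + ∂ C(L)`, and the
dimension formula for sums and intersections gives
`rank ∂(K ∩ L) + rank ∂(K ∪ L) ≤ rank ∂K + rank ∂L`. So `t̃b(K) + t̃b(L) ≤ t̃b(K ∩ L) + t̃b(K ∪ L)`,
and since full subcomplexes commute with `∩` and `∪`, summing over `J ⊆ [m]` gives the claim. -/

open Finset Module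

namespace IsComplex

variable {K L : Finset (Finset ℕ)}

lemma union (hK : IsComplex K) (hL : IsComplex L) : IsComplex (K ∪ L) := by
  intro σ hσ τ hτ
  rcases mem_union.1 hσ with h | h
  · exact mem_union_left _ (hK σ h τ hτ)
  · exact mem_union_right _ (hL σ h τ hτ)

lemma inter (hK : IsComplex K) (hL : IsComplex L) : IsComplex (K ∩ L) := fun σ hσ τ hτ =>
  mem_inter.2 ⟨hK σ (mem_inter.1 hσ).1 τ hτ, hL σ (mem_inter.1 hσ).2 τ hτ⟩

lemma restr (hK : IsComplex K) (J : Finset ℕ) : IsComplex (restr K J) := fun σ hσ τ hτ =>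
  mem_filter.2 ⟨hK σ (mem_filter.1 hσ).1 τ hτ, hτ.trans (mem_filter.1 hσ).2⟩

lemma empty_mem (hK : IsComplex K) (hne : K.Nonempty) : ∅ ∈ K :=
  hK _ hne.choose_spec ∅ (empty_subset _)

end IsComplex

lemma restr_inter (K L : Finset (Finset ℕ)) (J : Finset ℕ) :
    restr (K ∩ L) J = restr K J ∩ restr L J :=
  filter_inter_distrib _ _ _

lemma restr_union (K L : Finset (Finset ℕ)) (J : Finset ℕ) :
    restr (K ∪ L) J = restr K J ∪ restr L J :=
  filter_union _ _ _

lemma subset_verts {K : Finset (Finset ℕ)} {σ : Finset ℕ} (hσ : σ ∈ K) : σ ⊆ verts K :=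
  le_sup (f := id) hσ

lemma verts_mono {K L : Finset (Finset ℕ)} (h : K ⊆ L) : verts K ⊆ verts L :=
  sup_mono h

lemma Finset.sum_sum_eq_zero_of_antisymm {α M : Type*} [AddCommGroup M] (s : Finset α)
    (f : α → α → M) (hanti : ∀ a b, f a b = -f b a) (hdiag : ∀ a, f a a = 0) :
    ∑ a ∈ s, ∑ b ∈ s, f a b = 0 := by
  rw [← sum_product']
  refine sum_involution (fun p _ => p.swap) (fun p _ => by simp [hanti p.1 p.2]) ?_
    (fun p hp => mem_product.2 ⟨(mem_product.1 hp).2, (mem_product.1 hp).1⟩) (fun _ _ => rfl)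
  rintro ⟨a, b⟩ _ hne heq
  obtain rfl : b = a := congrArg Prod.fst heq
  exact hne (hdiag b)

section Boundary

variable (F : Type*) [Field F]

noncomputable def bdryFun (V : Finset ℕ) : (Finset ℕ → F) →ₗ[F] (Finset ℕ → F) where
  toFun f σ := ∑ v ∈ V, if v ∈ σ then 0 else (-1 : F) ^ #{u ∈ σ | u < v} * f (insert v σ)
  map_add' f g := by
    funext σ
    simp only [Pi.add_apply, ← sum_add_distrib, mul_add]
    exact sum_congr rfl fun v _ => by split_ifs <;> simp
  map_smul' a f := by
    funext σ
    simp only [Pi.smul_apply, smul_eq_mul, RingHom.id_apply, mul_sum]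
    exact sum_congr rfl fun v _ => by split_ifs <;> ring

lemma bdryFun_apply (V : Finset ℕ) (f : Finset ℕ → F) (σ : Finset ℕ) :
    bdryFun F V f σ =
      ∑ v ∈ V, if v ∈ σ then 0 else (-1 : F) ^ #{u ∈ σ | u < v} * f (insert v σ) :=
  rfl

lemma neg_one_pow_filter_lt_mul_swap {σ : Finset ℕ} {v w : ℕ} (hv : v ∉ σ) (hw : w ∉ σ)
    (hvw : v ≠ w) :
    (-1 : F) ^ #{u ∈ σ | u < v} * (-1 : F) ^ #{u ∈ insert v σ | u < w} =
      -((-1 : F) ^ #{u ∈ σ | u < w} * (-1 : F) ^ #{u ∈ insert w σ | u < v}) := by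
  rcases hvw.lt_or_gt with h | h
  · rw [filter_insert, if_pos h, filter_insert, if_neg (not_lt.2 h.le),
      card_insert_of_notMem (fun hm => hv (mem_filter.1 hm).1), pow_succ]
    ring
  · rw [filter_insert, if_neg (not_lt.2 h.le), filter_insert, if_pos h,
      card_insert_of_notMem (fun hm => hw (mem_filter.1 hm).1), pow_succ]
    ring

lemma bdryFun_bdryFun (V : Finset ℕ) (f : Finset ℕ → F) : bdryFun F V (bdryFun F V f) = 0 := by
  funext σ
  let term (v w : ℕ) : F := if v ∈ σ ∨ w ∈ insert v σ then 0 else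
    (-1 : F) ^ #{u ∈ σ | u < v} * (-1 : F) ^ #{u ∈ insert v σ | u < w} * f (insert w (insert v σ))
  have hexpand : bdryFun F V (bdryFun F V f) σ = ∑ v ∈ V, ∑ w ∈ V, term v w := by
    refine sum_congr rfl fun v _ => ?_
    by_cases hv : v ∈ σ
    · simp [term, hv]
    · simp only [term, hv, if_false, false_or, bdryFun_apply, mul_sum]
      exact sum_congr rfl fun w _ => by split_ifs <;> ring
  rw [hexpand]
  refine sum_sum_eq_zero_of_antisymm V term (fun v w => ?_) (fun v => by simp [term])
  by_cases hdeg : v ∈ σ ∨ w ∈ σ ∨ v = w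
  · have hvw : v ∈ σ ∨ w ∈ insert v σ := by grind
    have hwv : w ∈ σ ∨ v ∈ insert w σ := by grind
    simp only [term, if_pos hvw, if_pos hwv, neg_zero]
  · obtain ⟨hv, hw, hvw⟩ : v ∉ σ ∧ w ∉ σ ∧ v ≠ w := by tauto
    have hvw' : ¬(v ∈ σ ∨ w ∈ insert v σ) := by grind
    have hwv' : ¬(w ∈ σ ∨ v ∈ insert w σ) := by grind
    simp only [term, if_neg hvw', if_neg hwv', insert_comm w v,
      neg_one_pow_filter_lt_mul_swap F hv hw hvw]
    ring

noncomputable def chainExtend (K : Finset (Finset ℕ)) (j : ℕ) :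
    Chain F K j →ₗ[F] (Finset ℕ → F) where
  toFun c σ := if h : σ ∈ K.filter (fun σ => σ.card = j) then c ⟨σ, h⟩ else 0
  map_add' c d := by
    funext σ
    simp only [Pi.add_apply]
    split_ifs <;> simp
  map_smul' a c := by
    funext σ
    simp only [Pi.smul_apply, smul_eq_mul, RingHom.id_apply]
    split_ifs <;> simp

lemma chainExtend_apply (K : Finset (Finset ℕ)) (j : ℕ) (c : Chain F K j) (σ : Finset ℕ) :
    chainExtend F K j c σ = if h : σ ∈ K.filter (fun σ => σ.card = j) then c ⟨σ, h⟩ else 0 :=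
  rfl

lemma chainExtend_injective (K : Finset (Finset ℕ)) (j : ℕ) :
    Function.Injective (chainExtend F K j) := fun c d h => funext fun σ => by
  simpa [chainExtend_apply, σ.2] using congrFun h σ.1

lemma mem_range_chainExtend {K : Finset (Finset ℕ)} {j : ℕ} {f : Finset ℕ → F} :
    f ∈ LinearMap.range (chainExtend F K j) ↔ ∀ σ, σ ∉ K ∨ σ.card ≠ j → f σ = 0 := by
  constructor
  · rintro ⟨c, rfl⟩ σ hσ
    rw [chainExtend_apply, dif_neg (by simpa only [mem_filter, not_and_or] using hσ)]
  · intro hf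
    refine ⟨fun σ => f σ.1, funext fun σ => ?_⟩
    rw [chainExtend_apply]
    split_ifs with h
    · rfl
    · exact (hf σ (by simpa only [mem_filter, not_and_or] using h)).symm

lemma range_chainExtend_inter (K L : Finset (Finset ℕ)) (j : ℕ) :
    LinearMap.range (chainExtend F (K ∩ L) j) =
      LinearMap.range (chainExtend F K j) ⊓ LinearMap.range (chainExtend F L j) := by
  ext f
  simp only [Submodule.mem_inf, mem_range_chainExtend, mem_inter]
  grind

lemma range_chainExtend_union_le (K L : Finset (Finset ℕ)) (j : ℕ) :
    LinearMap.range (chainExtend F (K ∪ L) j) ≤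
      LinearMap.range (chainExtend F K j) ⊔ LinearMap.range (chainExtend F L j) := by
  classical
  intro f hf
  rw [mem_range_chainExtend] at hf
  refine Submodule.mem_sup.2 ⟨fun σ => if σ ∈ K then f σ else 0, ?_,
    fun σ => if σ ∈ K then 0 else f σ, ?_, funext fun σ => by by_cases σ ∈ K <;> simp [*]⟩
  all_goals
    rw [mem_range_chainExtend]
    intro σ hσ
    by_cases σ ∈ K <;> simp_all

lemma chainExtend_bdry {K : Finset (Finset ℕ)} (hK : IsComplex K) {V : Finset ℕ}
    (hV : verts K ⊆ V) (j : ℕ) (c : Chain F K (j + 1)) :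
    chainExtend F K j (bdry F K j c) = bdryFun F V (chainExtend F K (j + 1) c) := by
  funext σ
  have hterm : ∀ v, (if v ∈ σ then 0 else
      (-1 : F) ^ #{u ∈ σ | u < v} * chainExtend F K (j + 1) c (insert v σ)) =
      if h : v ∉ σ ∧ insert v σ ∈ K.filter (fun σ => σ.card = j + 1) then
        (-1 : F) ^ #{u ∈ σ | u < v} * c ⟨insert v σ, h.2⟩ else 0 := fun v => by
    rw [chainExtend_apply]
    by_cases hv : v ∈ σ <;> simp only [hv] <;> split_ifs <;> simp_all
  have hverts : ∀ v ∈ V, v ∉ verts K →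
      ¬(v ∉ σ ∧ insert v σ ∈ K.filter (fun σ => σ.card = j + 1)) := fun v _ hv h =>
    hv (subset_verts (mem_filter.1 h.2).1 (mem_insert_self v σ))
  rw [bdryFun_apply, sum_congr rfl fun v _ => hterm v,
    ← sum_subset hV fun v hvV hv => dif_neg (hverts v hvV hv), chainExtend_apply]
  split_ifs with hσ
  · rfl
  · refine (sum_eq_zero fun v _ => dif_neg fun h => hσ ?_).symm
    obtain ⟨hv, hmem⟩ := h
    rw [mem_filter, card_insert_of_notMem hv] at hmem
    exact mem_filter.2 ⟨hK _ hmem.1 σ (subset_insert v σ), by omega⟩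

lemma bdry_comp_bdry {K : Finset (Finset ℕ)} (hK : IsComplex K) (j : ℕ) :
    (bdry F K j).comp (bdry F K (j + 1)) = 0 := by
  refine LinearMap.ext fun c => chainExtend_injective F K j ?_
  rw [LinearMap.comp_apply, chainExtend_bdry F hK subset_rfl, chainExtend_bdry F hK subset_rfl,
    bdryFun_bdryFun, LinearMap.zero_apply, map_zero]

noncomputable def bdryRank (K : Finset (Finset ℕ)) (j : ℕ) : ℕ :=
  finrank F (LinearMap.range (bdry F K j))

lemma bdryRank_eq_finrank_map {K : Finset (Finset ℕ)} (hK : IsComplex K) {V : Finset ℕ}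
    (hV : verts K ⊆ V) (j : ℕ) :
    bdryRank F K j =
      finrank F ((LinearMap.range (chainExtend F K (j + 1))).map (bdryFun F V)) := by
  have hcomm : chainExtend F K j ∘ₗ bdry F K j = bdryFun F V ∘ₗ chainExtend F K (j + 1) :=
    LinearMap.ext (chainExtend_bdry F hK hV j)
  rw [← LinearMap.range_comp, ← hcomm, LinearMap.range_comp, bdryRank]
  exact (Submodule.equivMapOfInjective _ (chainExtend_injective F K j) _).finrank_eq

lemma bdryRank_inter_add_bdryRank_union_le {K L : Finset (Finset ℕ)} (hK : IsComplex K)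
    (hL : IsComplex L) (j : ℕ) :
    bdryRank F (K ∩ L) j + bdryRank F (K ∪ L) j ≤ bdryRank F K j + bdryRank F L j := by
  rw [bdryRank_eq_finrank_map F hK (verts_mono (subset_union_left (s₂ := L))),
    bdryRank_eq_finrank_map F hL (verts_mono (subset_union_right (s₁ := K))),
    bdryRank_eq_finrank_map F (hK.inter hL)
      (verts_mono (inter_subset_left.trans (subset_union_left (s₂ := L)))),
    bdryRank_eq_finrank_map F (hK.union hL) subset_rfl]
  set d := bdryFun F (verts (K ∪ L))
  set A := (LinearMap.range (chainExtend F K (j + 1))).map d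
  set B := (LinearMap.range (chainExtend F L (j + 1))).map d
  have hinter : finrank F ((LinearMap.range (chainExtend F (K ∩ L) (j + 1))).map d) ≤
      finrank F ↥(A ⊓ B) := by
    refine Submodule.finrank_mono ?_
    rw [range_chainExtend_inter]
    exact Submodule.map_inf_le d
  have hunion : finrank F ((LinearMap.range (chainExtend F (K ∪ L) (j + 1))).map d) ≤
      finrank F ↥(A ⊔ B) := by
    refine Submodule.finrank_mono ?_
    rw [← Submodule.map_sup]
    exact Submodule.map_mono (range_chainExtend_union_le F K L (j + 1))
  have := Submodule.finrank_sup_add_finrank_inf_eq A B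
  omega

end Boundary

section BettiNumbers

variable (F : Type*) [Field F]

lemma finrank_chain (K : Finset (Finset ℕ)) (j : ℕ) :
    finrank F (Chain F K j) = #{σ ∈ K | σ.card = j} := by
  simp

lemma hBetti_zero_add_bdryRank (K : Finset (Finset ℕ)) :
    hBetti F K 0 + bdryRank F K 0 = #{σ ∈ K | σ.card = 0} := by
  have := Submodule.finrank_le (LinearMap.range (bdry F K 0))
  rw [hBetti, bdryRank, ← finrank_chain F K 0]
  omega

lemma hBetti_succ_add_bdryRank {K : Finset (Finset ℕ)} (hK : IsComplex K) (j : ℕ) :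
    hBetti F K (j + 1) + bdryRank F K (j + 1) + bdryRank F K j = #{σ ∈ K | σ.card = j + 1} := by
  have hle : bdryRank F K (j + 1) ≤ finrank F (LinearMap.ker (bdry F K j)) :=
    Submodule.finrank_mono (LinearMap.range_le_ker_iff.2 (bdry_comp_bdry F hK j))
  have := LinearMap.finrank_range_add_finrank_ker (bdry F K j)
  rw [hBetti, ← finrank_chain F K (j + 1)]
  unfold bdryRank at *
  omega

lemma bdryRank_eq_zero {K : Finset (Finset ℕ)} {j : ℕ} (hj : (verts K).card ≤ j) :
    bdryRank F K j = 0 := by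
  have : IsEmpty {σ // σ ∈ K.filter (fun σ => σ.card = j + 1)} := ⟨fun σ => by
    have := card_le_card (subset_verts (mem_filter.1 σ.2).1)
    rw [(mem_filter.1 σ.2).2] at this
    omega⟩
  rw [bdryRank, Subsingleton.elim (bdry F K j) 0, LinearMap.range_zero, finrank_bot]

lemma sum_hBetti_add_two_mul_sum_bdryRank {K : Finset (Finset ℕ)} (hK : IsComplex K) (n : ℕ) :
    ∑ j ∈ range (n + 1), hBetti F K j + 2 * ∑ j ∈ range (n + 1), bdryRank F K j =
      ∑ j ∈ range (n + 1), #{σ ∈ K | σ.card = j} + bdryRank F K n := by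
  induction n with
  | zero =>
    have := hBetti_zero_add_bdryRank F K
    simp only [zero_add, sum_range_one]
    omega
  | succ n ih =>
    have := hBetti_succ_add_bdryRank F hK n
    rw [sum_range_succ, sum_range_succ (bdryRank F K),
      sum_range_succ (fun j => #{σ ∈ K | σ.card = j})]
    omega

lemma rtb_add_two_mul_sum_bdryRank {K : Finset (Finset ℕ)} (hK : IsComplex K) (hne : K.Nonempty)
    {N : ℕ} (hN : (verts K).card < N) :
    rtb F K + 2 * ∑ j ∈ range N, bdryRank F K j = #K := by
  have hsum : ∑ j ∈ range N, bdryRank F K j = ∑ j ∈ range ((verts K).card + 1), bdryRank F K j :=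
    (sum_subset (range_subset_range.2 hN) fun j _ hj =>
      bdryRank_eq_zero F (by rw [mem_range, not_lt] at hj; omega)).symm
  rw [rtb, if_neg hne.ne_empty, hsum, sum_hBetti_add_two_mul_sum_bdryRank F hK,
    bdryRank_eq_zero F le_rfl, add_zero]
  refine (card_eq_sum_card_fiberwise fun σ hσ => ?_).symm
  simpa [Nat.lt_succ_iff] using card_le_card (subset_verts hσ)

lemma rtb_add_rtb_le {K L : Finset (Finset ℕ)} (hK : IsComplex K) (hL : IsComplex L) :
    rtb F K + rtb F L ≤ rtb F (K ∩ L) + rtb F (K ∪ L) := by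
  rcases K.eq_empty_or_nonempty with rfl | hKne
  · simp
  rcases L.eq_empty_or_nonempty with rfl | hLne
  · simp [add_comm]
  set N := (verts (K ∪ L)).card + 1
  have hN : ∀ {M}, M ⊆ K ∪ L → (verts M).card < N := fun hM =>
    Nat.lt_succ_of_le (card_le_card (verts_mono hM))
  have hK' := rtb_add_two_mul_sum_bdryRank F hK hKne (hN subset_union_left)
  have hL' := rtb_add_two_mul_sum_bdryRank F hL hLne (hN subset_union_right)
  have hKL := rtb_add_two_mul_sum_bdryRank F (hK.inter hL)
    ⟨∅, mem_inter.2 ⟨hK.empty_mem hKne, hL.empty_mem hLne⟩⟩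
    (hN (inter_subset_left.trans subset_union_left))
  have hKuL := rtb_add_two_mul_sum_bdryRank F (hK.union hL) (hKne.mono subset_union_left)
    (hN subset_rfl)
  have hrank : ∑ j ∈ range N, bdryRank F (K ∩ L) j + ∑ j ∈ range N, bdryRank F (K ∪ L) j ≤
      ∑ j ∈ range N, bdryRank F K j + ∑ j ∈ range N, bdryRank F L j := by
    simp only [← sum_add_distrib]
    exact sum_le_sum fun j _ => bdryRank_inter_add_bdryRank_union_le F hK hL j
  have := card_inter_add_card_union K L
  omega

end BettiNumbers

theorem stmt7_general (F : Type*) [Field F] (m : ℕ) (K L : Finset (Finset ℕ))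
    (hK : IsComplex K) (hL : IsComplex L) :
    Dtilde F (Finset.range m) K + Dtilde F (Finset.range m) L ≤
      Dtilde F (Finset.range m) (K ∩ L) + Dtilde F (Finset.range m) (K ∪ L) := by
  simp only [Dtilde, ← sum_add_distrib, restr_inter, restr_union]
  exact sum_le_sum fun J _ => rtb_add_rtb_le F (hK.restr J) (hL.restr J)

/-- Submodularity of the total bigraded Betti number: for complexes
`K`, `L` with vertex set `[m]`, `D̃(K) + D̃(L) ≤ D̃(K ∩ L) + D̃(K ∪ L)`. -/
theorem stmt7 (F : Type*) [Field F] (m : ℕ) (K L : Finset (Finset ℕ))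
    (hK : IsComplex K) (hL : IsComplex L)
    (hvK : verts K = Finset.range m) (hvL : verts L = Finset.range m) :
    Dtilde F (Finset.range m) K + Dtilde F (Finset.range m) L ≤
      Dtilde F (Finset.range m) (K ∩ L) + Dtilde F (Finset.range m) (K ∪ L) :=
  stmt7_general F m K L hK hL
end

section
/- For any field F and integers 0 ≤ d ≤ m-1, the total bigraded Betti number of the d-skeleton of the full simplex on [m] satisfies D̃(Δ^[m]_(d);F) = g(m, d+1) + 1 = Σ_{i=0}^{m-d-2} C(m, m-i)·C(m-i-1, d+1) + 1. -/
/-!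
The full subcomplex of `Δ^[m]_(d)` on `J ⊆ [m]` is the `d`-skeleton of the simplex on `J`.
For `J ≠ ∅`, coning from a vertex `a ∈ J` is a contracting chain homotopy in every degree where
cones stay inside the skeleton, so the augmented chain complex is exact below its top degree.
Rank–nullity then gives `rank ∂ᵢ = C(|J| - 1, i)` for `i ≤ d`, leaving the single reduced Betti
number `β̃_d = C(|J| - 1, d + 1)`. Summing over `J` by cardinality gives `g(m, d + 1)`, and
`J = ∅` contributes the `+ 1`.
-/

namespace SkeletonBetti

open Finset

variable (F : Type*) [Field F]

/-- The sign of the face `τ` in `insert v τ`, as in `bdry`. -/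
def insSign (τ : Finset ℕ) (v : ℕ) : F := (-1 : F) ^ (τ.filter (fun u => u < v)).card

variable {F}

lemma insSign_mul_self (τ : Finset ℕ) (v : ℕ) : insSign F τ v * insSign F τ v = 1 := by
  rw [insSign, ← pow_add, Even.neg_one_pow ⟨_, rfl⟩]

lemma insSign_insert {u : ℕ} {τ : Finset ℕ} (hu : u ∉ τ) (v : ℕ) :
    insSign F (insert u τ) v = if u < v then -insSign F τ v else insSign F τ v := by
  unfold insSign
  rw [filter_insert]
  split_ifs
  · rw [card_insert_of_notMem (fun h => hu (mem_filter.mp h).1), pow_succ, mul_neg_one]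
  · rfl

lemma insSign_mul_insSign_insert_swap {v w : ℕ} {τ : Finset ℕ} (hvw : v ≠ w) (hv : v ∉ τ)
    (hw : w ∉ τ) :
    insSign F τ v * insSign F (insert v τ) w = -(insSign F τ w * insSign F (insert w τ) v) := by
  rw [insSign_insert hv, insSign_insert hw]
  rcases hvw.lt_or_gt with h | h
  · rw [if_pos h, if_neg h.not_gt]; ring
  · rw [if_neg h.not_gt, if_pos h]; ring

lemma insSign_insert_mul_insSign_insert {v w : ℕ} {τ : Finset ℕ} (hvw : v ≠ w) (hv : v ∉ τ)
    (hw : w ∉ τ) :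
    insSign F (insert w τ) v * insSign F (insert v τ) w = -(insSign F τ w * insSign F τ v) := by
  rw [insSign_insert hv, insSign_insert hw]
  rcases hvw.lt_or_gt with h | h
  · rw [if_pos h, if_neg h.not_gt]; ring
  · rw [if_neg h.not_gt, if_pos h]; ring

/-- The boundary operator `bdry`, acting on chains extended by zero to all finite sets. -/
def bdryFun (V : Finset ℕ) (f : Finset ℕ → F) (τ : Finset ℕ) : F :=
  ∑ v ∈ V, if v ∈ τ then 0 else insSign F τ v * f (insert v τ)

def cone (a : ℕ) (f : Finset ℕ → F) (σ : Finset ℕ) : F :=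
  if a ∈ σ then insSign F (σ.erase a) a * f (σ.erase a) else 0

lemma cone_zero (a : ℕ) : cone a (0 : Finset ℕ → F) = 0 := by
  funext σ
  simp [cone]

lemma sum_sum_eq_zero_of_antisymm {α M : Type*} [AddCommGroup M] (s : Finset α) (G : α → α → M)
    (hG : ∀ v w, G v w = -G w v) (hdiag : ∀ v, G v v = 0) : ∑ v ∈ s, ∑ w ∈ s, G v w = 0 := by
  rw [← sum_product']
  refine sum_involution (fun p _ => p.swap) (fun p _ => by simp [hG p.1 p.2]) ?_
    (fun p hp => mem_product.mpr (mem_product.mp hp).symm) (fun p _ => rfl)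
  rintro ⟨v, w⟩ _ hne heq
  have hwv : w = v := congrArg Prod.fst heq
  exact hne (hwv ▸ hdiag v)

lemma bdryFun_bdryFun (V : Finset ℕ) (f : Finset ℕ → F) : bdryFun V (bdryFun V f) = 0 := by
  funext τ
  let G v w : F := if v ∈ τ ∨ w ∈ insert v τ then 0
    else insSign F τ v * insSign F (insert v τ) w * f (insert w (insert v τ))
  have hG : ∀ v w, G v w = -G w v := by
    intro v w
    by_cases hvw : v = w
    · subst hvw; simp [G]
    by_cases hv : v ∈ τ
    · simp [G, hv]
    by_cases hw : w ∈ τ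
    · simp [G, hw]
    simp only [G, mem_insert, hv, hw, hvw, Ne.symm hvw, or_self, if_false,
      insSign_mul_insSign_insert_swap hvw hv hw, insert_comm w v]
    ring
  calc bdryFun V (bdryFun V f) τ = ∑ v ∈ V, ∑ w ∈ V, G v w := by
        refine sum_congr rfl fun v _ => ?_
        by_cases hv : v ∈ τ
        · simp [G, hv]
        · simp only [bdryFun, G, hv, if_false, false_or, mul_sum, mul_ite, mul_zero, mul_assoc]
    _ = 0 := sum_sum_eq_zero_of_antisymm V G hG fun v => by simp [G]

lemma bdryFun_cone_of_notMem {V : Finset ℕ} {a : ℕ} (ha : a ∈ V) (f : Finset ℕ → F)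
    {τ : Finset ℕ} (haτ : a ∉ τ) : bdryFun V (cone a f) τ = f τ := by
  rw [bdryFun, sum_eq_single_of_mem a ha]
  · rw [if_neg haτ, cone, if_pos (mem_insert_self a τ), erase_insert haτ, ← mul_assoc,
      insSign_mul_self, one_mul]
  · intro v _ hva
    have : a ∉ insert v τ := by simp [haτ, Ne.symm hva]
    simp [cone, this]

lemma bdryFun_cone_add_cone_bdryFun_insert {V : Finset ℕ} {a : ℕ} (ha : a ∈ V)
    (f : Finset ℕ → F) {ρ : Finset ℕ} (haρ : a ∉ ρ) :
    bdryFun V (cone a f) (insert a ρ) + cone a (bdryFun V f) (insert a ρ) = f (insert a ρ) := by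
  rw [cone, if_pos (mem_insert_self a ρ), erase_insert haρ, bdryFun, bdryFun, mul_sum,
    ← sum_add_distrib]
  refine (sum_congr rfl fun v _ => ?_).trans
    ((sum_ite_eq' V a fun _ => f (insert a ρ)).trans (if_pos ha))
  by_cases hva : v = a
  · subst hva
    rw [if_pos (mem_insert_self v ρ), if_neg haρ, ← mul_assoc, insSign_mul_self, if_pos rfl]
    ring
  by_cases hvρ : v ∈ ρ
  · simp [hvρ, hva]
  have hvaρ : v ∉ insert a ρ := by simp [hva, hvρ]
  have havρ : a ∉ insert v ρ := by simp [Ne.symm hva, haρ]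
  rw [if_neg hvaρ, if_neg hvρ, if_neg hva, cone, if_pos (mem_insert_of_mem (mem_insert_self a ρ)),
    insert_comm, erase_insert havρ, ← mul_assoc, ← mul_assoc,
    insSign_insert_mul_insSign_insert hva hvρ haρ]
  ring

lemma bdryFun_cone_add_cone_bdryFun {V : Finset ℕ} {a : ℕ} (ha : a ∈ V) (f : Finset ℕ → F) :
    bdryFun V (cone a f) + cone a (bdryFun V f) = f := by
  funext τ
  by_cases haτ : a ∈ τ
  · rw [← insert_erase haτ]
    exact bdryFun_cone_add_cone_bdryFun_insert ha f (notMem_erase a τ)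
  · simp [bdryFun_cone_of_notMem ha f haτ, cone, haτ]

variable (F) in
/-- Extension of a chain by zero to all finite sets. -/
def cext (K : Finset (Finset ℕ)) (n : ℕ) : Chain F K n →ₗ[F] Finset ℕ → F where
  toFun c σ := if h : σ ∈ K.filter (fun τ => τ.card = n) then c ⟨σ, h⟩ else 0
  map_add' c c' := by
    funext σ
    dsimp only [Pi.add_apply]
    split_ifs <;> simp
  map_smul' a c := by
    funext σ
    dsimp only [Pi.smul_apply, RingHom.id_apply]
    split_ifs <;> simp

lemma cext_apply_of_mem {K : Finset (Finset ℕ)} {n : ℕ} (c : Chain F K n) {σ : Finset ℕ}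
    (h : σ ∈ K.filter (fun τ => τ.card = n)) : cext F K n c σ = c ⟨σ, h⟩ := dif_pos h

lemma cext_apply_of_notMem {K : Finset (Finset ℕ)} {n : ℕ} (c : Chain F K n) {σ : Finset ℕ}
    (h : σ ∉ K.filter (fun τ => τ.card = n)) : cext F K n c σ = 0 := dif_neg h

lemma cext_injective (K : Finset (Finset ℕ)) (n : ℕ) : Function.Injective (cext F K n) := by
  intro c c' h
  funext σ
  simpa only [cext_apply_of_mem _ σ.2] using congrFun h σ.1

lemma cext_restrict {K : Finset (Finset ℕ)} {n : ℕ} {f : Finset ℕ → F}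
    (hf : ∀ σ ∉ K.filter (fun τ => τ.card = n), f σ = 0) :
    cext F K n (fun σ => f σ.1) = f := by
  funext σ
  by_cases h : σ ∈ K.filter (fun τ => τ.card = n)
  · rw [cext_apply_of_mem _ h]
  · rw [cext_apply_of_notMem _ h, hf σ h]

/-- Off `K`, both sides vanish because `K` is closed under taking faces. -/
lemma cext_bdry {K : Finset (Finset ℕ)} (hK : IsComplex K) (j : ℕ) (c : Chain F K (j + 1)) :
    cext F K j (bdry F K j c) = bdryFun (verts K) (cext F K (j + 1) c) := by
  funext ρ
  by_cases hρ : ρ ∈ K.filter (fun τ => τ.card = j)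
  · rw [cext_apply_of_mem _ hρ]
    refine sum_congr rfl fun v _ => ?_
    by_cases hv : v ∈ ρ
    · simp [hv]
    by_cases hins : insert v ρ ∈ K.filter (fun σ => σ.card = j + 1)
    · rw [dif_pos ⟨hv, hins⟩, if_neg hv, cext_apply_of_mem _ hins, insSign]
    · rw [dif_neg (fun h => hins h.2), if_neg hv, cext_apply_of_notMem _ hins, mul_zero]
  · rw [cext_apply_of_notMem _ hρ]
    refine (sum_eq_zero fun v _ => ?_).symm
    split_ifs with hv
    · rfl
    rw [cext_apply_of_notMem, mul_zero]
    rw [mem_filter] at hρ ⊢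
    rw [card_insert_of_notMem hv]
    exact fun h => hρ ⟨hK _ h.1 ρ (subset_insert v ρ), by omega⟩

lemma bdry_bdry {K : Finset (Finset ℕ)} (hK : IsComplex K) (j : ℕ) (c : Chain F K (j + 1 + 1)) :
    bdry F K j (bdry F K (j + 1) c) = 0 := by
  apply cext_injective K j
  rw [cext_bdry hK, cext_bdry hK, bdryFun_bdryFun, map_zero]

def skelOn (J : Finset ℕ) (d : ℕ) : Finset (Finset ℕ) :=
  J.powerset.filter (fun σ => σ.card ≤ d + 1)

lemma mem_skelOn {J : Finset ℕ} {d : ℕ} {σ : Finset ℕ} :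
    σ ∈ skelOn J d ↔ σ ⊆ J ∧ σ.card ≤ d + 1 := by
  rw [skelOn, mem_filter, mem_powerset]

lemma isComplex_skelOn (J : Finset ℕ) (d : ℕ) : IsComplex (skelOn J d) := by
  intro σ hσ τ hτ
  rw [mem_skelOn] at hσ ⊢
  exact ⟨hτ.trans hσ.1, (card_le_card hτ).trans hσ.2⟩

lemma verts_skelOn (J : Finset ℕ) (d : ℕ) : verts (skelOn J d) = J := by
  refine subset_antisymm (Finset.sup_le fun σ hσ => (mem_skelOn.mp hσ).1) fun a ha => ?_
  exact mem_sup.mpr ⟨{a}, mem_skelOn.mpr ⟨singleton_subset_iff.mpr ha, by simp⟩, mem_singleton_self a⟩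

lemma restr_skel {m d : ℕ} {J : Finset ℕ} (hJ : J ⊆ range m) :
    restr (skel m d) J = skelOn J d := by
  ext σ
  simp only [restr, skel, mem_filter, mem_powerset, mem_skelOn]
  exact ⟨fun h => ⟨h.2, h.1.2⟩, fun h => ⟨⟨h.1.trans hJ, h.2⟩, h.1⟩⟩

lemma finrank_chain_skelOn {J : Finset ℕ} {d i : ℕ} (hi : i ≤ d + 1) :
    Module.finrank F (Chain F (skelOn J d) i) = J.card.choose i := by
  rw [Module.finrank_fintype_fun_eq_card, Fintype.card_coe, ← card_powersetCard]
  congr 1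
  ext σ
  rw [mem_filter, mem_skelOn, mem_powersetCard]
  exact ⟨fun h => ⟨h.1.1, h.2⟩, fun h => ⟨⟨h.1, h.2 ▸ hi⟩, h.2⟩⟩

lemma finrank_chain_skelOn_of_lt {J : Finset ℕ} {d i : ℕ} (hi : d + 1 < i) :
    Module.finrank F (Chain F (skelOn J d) i) = 0 := by
  rw [Module.finrank_fintype_fun_eq_card, Fintype.card_coe, card_eq_zero, filter_eq_empty_iff]
  intro σ hσ
  have := (mem_skelOn.mp hσ).2
  omega

/-- A cycle is the boundary of its cone from any vertex `a ∈ J`; the cone stays in the skeleton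
as long as `j ≤ d`. -/
lemma mem_range_bdry_skelOn {J : Finset ℕ} {d j a : ℕ} (ha : a ∈ J) (hj : j ≤ d)
    (c : Chain F (skelOn J d) j) (hc : bdryFun J (cext F _ j c) = 0) :
    c ∈ LinearMap.range (bdry F (skelOn J d) j) := by
  have hsupp : ∀ σ ∉ (skelOn J d).filter (fun τ => τ.card = j + 1),
      cone a (cext F _ j c) σ = 0 := by
    intro σ hσ
    rw [cone]
    split_ifs with haσ
    · rw [cext_apply_of_notMem, mul_zero]
      rw [mem_filter, mem_skelOn] at hσ ⊢
      rw [card_erase_of_mem haσ]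
      have := card_pos.mpr ⟨a, haσ⟩
      rintro ⟨⟨hJ, -⟩, hcard⟩
      exact hσ ⟨⟨by simpa [insert_erase haσ] using insert_subset ha hJ, by omega⟩, by omega⟩
    · rfl
  refine ⟨fun σ => cone a (cext F _ j c) σ.1, cext_injective _ j ?_⟩
  have key := bdryFun_cone_add_cone_bdryFun ha (cext F _ j c)
  rw [hc, cone_zero, add_zero] at key
  rw [cext_bdry (isComplex_skelOn J d), cext_restrict hsupp, verts_skelOn, key]

lemma range_bdry_zero_skelOn {J : Finset ℕ} (hJ : J.Nonempty) (d : ℕ) :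
    LinearMap.range (bdry F (skelOn J d) 0) = ⊤ := by
  obtain ⟨a, ha⟩ := hJ
  refine Submodule.eq_top_iff'.mpr fun c => mem_range_bdry_skelOn ha d.zero_le c ?_
  funext τ
  refine sum_eq_zero fun v _ => ?_
  split_ifs
  · rfl
  · rw [cext_apply_of_notMem, mul_zero]
    exact fun h => (insert_nonempty v τ).ne_empty (card_eq_zero.mp (mem_filter.mp h).2)

lemma ker_bdry_skelOn {J : Finset ℕ} (hJ : J.Nonempty) {d k : ℕ} (hk : k + 1 ≤ d) :
    LinearMap.ker (bdry F (skelOn J d) k) = LinearMap.range (bdry F (skelOn J d) (k + 1)) := by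
  obtain ⟨a, ha⟩ := hJ
  refine le_antisymm (fun c hc => mem_range_bdry_skelOn ha hk c ?_) ?_
  · have := cext_bdry (isComplex_skelOn J d) k c
    rwa [verts_skelOn, LinearMap.mem_ker.mp hc, map_zero, eq_comm] at this
  · rintro _ ⟨e, rfl⟩
    exact bdry_bdry (isComplex_skelOn J d) k e

lemma choose_pred_add_choose_pred {n : ℕ} (hn : 0 < n) (k : ℕ) :
    (n - 1).choose k + (n - 1).choose (k + 1) = n.choose (k + 1) := by
  obtain ⟨n, rfl⟩ := Nat.exists_eq_add_one.mpr hn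
  rw [add_tsub_cancel_right, Nat.choose_succ_succ']

lemma finrank_range_bdry_skelOn {J : Finset ℕ} (hJ : J.Nonempty) {d i : ℕ} (hi : i ≤ d) :
    Module.finrank F (LinearMap.range (bdry F (skelOn J d) i)) = (J.card - 1).choose i := by
  induction i with
  | zero => rw [range_bdry_zero_skelOn hJ, finrank_top, finrank_chain_skelOn (by omega)]; simp
  | succ k ih =>
    have := LinearMap.finrank_range_add_finrank_ker (bdry F (skelOn J d) k)
    rw [ker_bdry_skelOn hJ hi, ih (by omega), finrank_chain_skelOn (by omega)] at this
    have := choose_pred_add_choose_pred (card_pos.mpr hJ) k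
    omega

lemma hBetti_skelOn {J : Finset ℕ} (hJ : J.Nonempty) (d i : ℕ) :
    hBetti F (skelOn J d) i = if i = d + 1 then (J.card - 1).choose (d + 1) else 0 := by
  cases i with
  | zero =>
    rw [hBetti, range_bdry_zero_skelOn hJ, finrank_top, Nat.sub_self, if_neg (by omega)]
  | succ t =>
    rw [hBetti]
    rcases lt_trichotomy t d with htd | rfl | htd
    · rw [ker_bdry_skelOn hJ htd, Nat.sub_self, if_neg (by omega)]
    · have hker := LinearMap.finrank_range_add_finrank_ker (bdry F (skelOn J t) t)
      rw [finrank_range_bdry_skelOn hJ le_rfl, finrank_chain_skelOn le_rfl] at hker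
      have hrange := LinearMap.finrank_range_le (bdry F (skelOn J t) (t + 1))
      rw [finrank_chain_skelOn_of_lt (by omega)] at hrange
      have := choose_pred_add_choose_pred (card_pos.mpr hJ) t
      rw [if_pos rfl]
      omega
    · have hker := Submodule.finrank_le (LinearMap.ker (bdry F (skelOn J d) t))
      rw [finrank_chain_skelOn_of_lt (by omega)] at hker
      rw [if_neg (by omega)]
      omega

/-- For `J = ∅` the complex is `{∅}`, with `β̃₋₁ = 1`, while `#J - 1` truncates to `0` and the
binomial vanishes. -/
lemma rtb_skelOn (J : Finset ℕ) (d : ℕ) :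
    rtb F (skelOn J d) = (J.card - 1).choose (d + 1) + if J = ∅ then 1 else 0 := by
  have hne : skelOn J d ≠ ∅ := ne_empty_of_mem (mem_skelOn.mpr ⟨empty_subset J, by simp⟩)
  rw [rtb, if_neg hne, verts_skelOn]
  rcases J.eq_empty_or_nonempty with rfl | hJ
  · have h0 := LinearMap.finrank_range_le (bdry F (skelOn ∅ d) 0)
    rw [finrank_chain_skelOn (by omega), card_empty, Nat.choose_zero_succ, Nat.le_zero] at h0
    rw [card_empty, zero_add, sum_range_one, hBetti, finrank_chain_skelOn (Nat.zero_le _), h0]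
    simp
  · rw [if_neg hJ.ne_empty, add_zero, sum_congr rfl fun i _ => hBetti_skelOn hJ d i,
      sum_ite_eq' _ _ fun _ => (J.card - 1).choose (d + 1)]
    split_ifs with hd
    · rfl
    · rw [mem_range] at hd
      exact (Nat.choose_eq_zero_of_lt (by omega)).symm

lemma sum_powerset_choose_card_pred {α : Type*} (s : Finset α) (d : ℕ) :
    ∑ J ∈ s.powerset, (J.card - 1).choose (d + 1) = g s.card (d + 1) := by
  rw [sum_powerset_apply_card (fun j => (j - 1).choose (d + 1)), g]
  refine (sum_subset (fun j hj => ?_) fun j _ hj => ?_).symm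
  · rw [mem_Icc] at hj
    rw [mem_range]
    omega
  · rw [mem_Icc, not_and_or, not_le, not_le] at hj
    rcases hj with h | h
    · rw [Nat.choose_eq_zero_of_lt (show j - 1 < d + 1 by omega), smul_zero]
    · rw [Nat.choose_eq_zero_of_lt h, zero_smul]

lemma Dtilde_skel (m d : ℕ) : Dtilde F (range m) (skel m d) = g m (d + 1) + 1 := by
  rw [Dtilde, sum_congr rfl fun J hJ => by rw [restr_skel (mem_powerset.mp hJ), rtb_skelOn],
    sum_add_distrib, sum_powerset_choose_card_pred, card_range,
    sum_ite_eq' _ _ fun _ => 1, if_pos (empty_mem_powerset _)]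

lemma g_succ_eq_sum_range (m d : ℕ) :
    g m (d + 1) = ∑ i ∈ range (m - d - 1), m.choose (m - i) * (m - i - 1).choose (d + 1) := by
  refine sum_nbij' (fun j => m - j) (fun i => m - i) ?_ ?_ ?_ ?_ ?_
  all_goals
    intro j hj
    simp only [mem_Icc, mem_range] at hj ⊢
  · omega
  · omega
  · omega
  · omega
  · rw [Nat.sub_sub_self hj.2]

end SkeletonBetti

theorem stmt9_general (F : Type*) [Field F] (m d : ℕ) :
    Dtilde F (Finset.range m) (skel m d) = g m (d + 1) + 1 ∧
      g m (d + 1) + 1 =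
        (∑ i ∈ Finset.range (m - d - 1), m.choose (m - i) * (m - i - 1).choose (d + 1)) + 1 :=
  ⟨SkeletonBetti.Dtilde_skel m d, by rw [SkeletonBetti.g_succ_eq_sum_range]⟩

/-- The total bigraded Betti number of the `d`-skeleton of the full
simplex on `[m]`:  `D̃(Δ^[m]_(d);F) = g(m, d+1) + 1 = ∑_{i=0}^{m-d-2} C(m, m-i)·C(m-i-1, d+1) + 1`. -/
theorem stmt9 (F : Type*) [Field F] (m d : ℕ) (hd : d < m) :
    Dtilde F (Finset.range m) (skel m d) = g m (d + 1) + 1 ∧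
      g m (d + 1) + 1 =
        (∑ i ∈ Finset.range (m - d - 1), m.choose (m - i) * (m - i - 1).choose (d + 1)) + 1 :=
  stmt9_general F m d
end

section
/- Let K be a simplicial complex with m vertices that is tight over a field F. Then: (i) K is pure, i.e., every maximal simplex of K has dimension equal to dim(K); and (ii) for every simplex σ of K, the link Link_K σ is tight over F. -/
/-!
For a vertex `v` of a complex `X` with deletion `X \ v`, the relative chains of the pair
`(X, X \ v)` are the chains of `lk v` shifted up by one degree, so the long exact sequence of the
pair gives `t̃b(lk v) ≤ t̃b(X \ v) + t̃b(X)`. Applied to the full subcomplexes `K|_{J ∪ v}` and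
summed over `J ⊆ V \ v`, this yields `D̃(lk v) ≤ D̃(K)`. Iterating along links gives the bound
`2^m ≤ 2^(d+1) · D̃(K)` for every complex, and tight complexes are its equality case. For tight `K`
the two bounds squeeze `lk v`: it has dimension `d - 1` and is tight. By induction over the
vertices of `σ`, every link `lk σ` is tight of dimension `d - |σ|`; when `σ` is maximal the link
is `{∅}`, so `|σ| = d + 1` and `K` is pure.
-/

namespace TightComplex

open Finset Module

theorem sum_sum_erase_eq_zero_of_antisymm {ι M : Type*} [DecidableEq ι] [AddCommGroup M]
    (s : Finset ι) (f : ι → ι → M) (h : ∀ v ∈ s, ∀ w ∈ s, v ≠ w → f v w = -f w v) :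
    ∑ v ∈ s, ∑ w ∈ s.erase v, f v w = 0 := by
  set g : ι × ι → M := fun p => if p.1 = p.2 then 0 else f p.1 p.2
  have hg : ∀ v, ∑ w ∈ s.erase v, f v w = ∑ w ∈ s, g (v, w) := fun v => by
    rw [← sum_erase s (f := fun w => g (v, w)) (a := v) (by simp [g])]
    exact sum_congr rfl fun w hw => by simp [g, (ne_of_mem_erase hw).symm]
  simp_rw [hg]
  rw [← sum_product' (f := fun v w => g (v, w))]
  refine sum_involution (fun p _ => p.swap) (fun p hp => ?_) (fun p _ hp => ?_)
    (fun p hp => mem_product.2 (mem_product.1 hp).symm) fun p _ => rfl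
  · obtain ⟨hv, hw⟩ := mem_product.1 hp
    by_cases hvw : p.1 = p.2
    · simp [g, hvw]
    · simp [g, hvw, Ne.symm hvw, h _ hv _ hw hvw]
  · intro hswap
    exact hp (by simp [g, show p.1 = p.2 from congrArg Prod.snd hswap])

theorem two_pow_squeeze {a b t u D : ℕ} (h₁ : 2 ^ a * D ≤ 2 ^ b) (h₂ : 2 ^ u ≤ 2 ^ t * D)
    (h : b + t ≤ a + u) : b + t = a + u ∧ D = 2 ^ (u - t) := by
  have hD : 0 < D := Nat.pos_of_ne_zero fun h0 => by simp [h0] at h₂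
  have hab : a ≤ b := (Nat.pow_le_pow_iff_right (by norm_num)).1
    ((Nat.le_mul_of_pos_right _ hD).trans h₁)
  have key : 2 ^ (a + u) ≤ 2 ^ (b + t) := calc
    2 ^ (a + u) = 2 ^ a * 2 ^ u := pow_add _ _ _
    _ ≤ 2 ^ a * (2 ^ t * D) := by gcongr
    _ = 2 ^ t * (2 ^ a * D) := by ring
    _ ≤ 2 ^ t * 2 ^ b := by gcongr
    _ = 2 ^ (b + t) := by rw [← pow_add, add_comm]
  have heq : b + t = a + u := le_antisymm h ((Nat.pow_le_pow_iff_right (by norm_num)).1 key)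
  have hb : 2 ^ b = 2 ^ a * 2 ^ (u - t) := by rw [← pow_add]; congr 1; omega
  have hu : 2 ^ u = 2 ^ t * 2 ^ (u - t) := by rw [← pow_add]; congr 1; omega
  exact ⟨heq, le_antisymm (Nat.le_of_mul_le_mul_left (hb ▸ h₁) (by positivity))
    (Nat.le_of_mul_le_mul_left (hu ▸ h₂) (by positivity))⟩

section Combinatorics

variable {K : Finset (Finset ℕ)} {v w : ℕ} {σ τ : Finset ℕ} {J : Finset ℕ}

theorem mem_verts : v ∈ verts K ↔ ∃ σ ∈ K, v ∈ σ := by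
  simp [verts, mem_sup]

theorem subset_verts (h : σ ∈ K) : σ ⊆ verts K :=
  le_sup (f := id) h

theorem verts_mono {K' : Finset (Finset ℕ)} (h : K ⊆ K') : verts K ⊆ verts K' :=
  sup_mono h

theorem sup_card_le_card_verts (K : Finset (Finset ℕ)) : K.sup card ≤ (verts K).card :=
  Finset.sup_le fun _ hσ => card_le_card (subset_verts hσ)

theorem singleton_mem_of_mem_verts (hK : IsComplex K) (hv : v ∈ verts K) : {v} ∈ K := by
  obtain ⟨σ, hσ, hvσ⟩ := mem_verts.1 hv
  exact hK σ hσ _ (singleton_subset_iff.2 hvσ)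

def deletion (K : Finset (Finset ℕ)) (v : ℕ) : Finset (Finset ℕ) := K.filter (fun σ => v ∉ σ)

theorem mem_deletion : σ ∈ deletion K v ↔ σ ∈ K ∧ v ∉ σ := mem_filter

theorem deletion_subset : deletion K v ⊆ K := filter_subset _ _

theorem notMem_of_mem_deletion (h : σ ∈ deletion K v) : v ∉ σ := (mem_deletion.1 h).2

theorem isComplex_deletion (hK : IsComplex K) : IsComplex (deletion K v) := fun σ hσ τ hτ =>
  mem_deletion.2 ⟨hK σ (mem_deletion.1 hσ).1 τ hτ, fun h => (mem_deletion.1 hσ).2 (hτ h)⟩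

theorem mem_link_singleton : τ ∈ linkK K {v} ↔ τ ∈ K ∧ v ∉ τ ∧ insert v τ ∈ K := by
  rw [linkK, mem_filter, disjoint_singleton_right, union_comm, ← insert_eq]

theorem link_subset_deletion : linkK K {v} ⊆ deletion K v := fun _ hτ =>
  mem_deletion.2 ⟨(mem_link_singleton.1 hτ).1, (mem_link_singleton.1 hτ).2.1⟩

theorem isComplex_link (hK : IsComplex K) : IsComplex (linkK K {v}) := fun σ hσ τ hτ => by
  obtain ⟨hσK, hvσ, hvσK⟩ := mem_link_singleton.1 hσ
  exact mem_link_singleton.2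
    ⟨hK σ hσK τ hτ, fun h => hvσ (hτ h), hK _ hvσK _ (insert_subset_insert v hτ)⟩

theorem verts_link_subset : verts (linkK K {v}) ⊆ (verts K).erase v := fun w hw => by
  obtain ⟨τ, hτ, hwτ⟩ := mem_verts.1 hw
  obtain ⟨hτK, hvτ, -⟩ := mem_link_singleton.1 hτ
  exact mem_erase.2 ⟨fun h => hvτ (h ▸ hwτ), subset_verts hτK hwτ⟩

theorem sup_card_link_add_one_le (hv : {v} ∈ K) : (linkK K {v}).sup card + 1 ≤ K.sup card := by
  have h₁ : 1 ≤ K.sup card := le_sup (f := card) hv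
  have h₂ : (linkK K {v}).sup card ≤ K.sup card - 1 := Finset.sup_le fun τ hτ => by
    obtain ⟨-, hvτ, hvτK⟩ := mem_link_singleton.1 hτ
    have := le_sup (f := card) hvτK
    rw [card_insert_of_notMem hvτ] at this
    omega
  omega

theorem link_empty (K : Finset (Finset ℕ)) : linkK K ∅ = K :=
  filter_true_of_mem fun τ hτ => ⟨disjoint_empty_right τ, by rwa [union_empty]⟩

theorem link_insert (hK : IsComplex K) (hvτ : v ∉ τ) :
    linkK K (insert v τ) = linkK (linkK K {v}) τ := by
  ext ρ
  rw [linkK, linkK, mem_filter, mem_filter, mem_link_singleton, mem_link_singleton,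
    disjoint_insert_right, union_insert]
  constructor
  · rintro ⟨hρ, ⟨hvρ, hdisj⟩, hins⟩
    refine ⟨⟨hρ, hvρ, hK _ hins _ (insert_subset_insert v subset_union_left)⟩, hdisj,
      hK _ hins _ (subset_insert v _), ?_, hins⟩
    rw [mem_union, not_or]
    exact ⟨hvρ, hvτ⟩
  · rintro ⟨⟨hρ, hvρ, -⟩, hdisj, -, -, hins⟩
    exact ⟨hρ, ⟨hvρ, hdisj⟩, hins⟩

theorem sup_card_link_eq_zero (hmax : ∀ τ ∈ K, σ ⊆ τ → σ = τ) : (linkK K σ).sup card = 0 := by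
  refine Nat.le_zero.1 (Finset.sup_le fun ρ hρ => ?_)
  obtain ⟨-, hdisj, hunion⟩ := mem_filter.1 hρ
  have hρσ : ρ ⊆ σ := (hmax _ hunion subset_union_right).symm ▸ subset_union_left
  rw [(disjoint_self_iff_empty ρ).1 (disjoint_of_subset_right hρσ hdisj), card_empty]

theorem mem_restr : σ ∈ restr K J ↔ σ ∈ K ∧ σ ⊆ J := mem_filter

theorem isComplex_restr (hK : IsComplex K) (J : Finset ℕ) : IsComplex (restr K J) :=
  fun σ hσ τ hτ => mem_restr.2 ⟨hK σ (mem_restr.1 hσ).1 τ hτ, hτ.trans (mem_restr.1 hσ).2⟩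

theorem deletion_restr_insert (hvJ : v ∉ J) : deletion (restr K (insert v J)) v = restr K J := by
  ext σ
  simp only [mem_deletion, mem_restr]
  exact ⟨fun ⟨⟨hσ, hσJ⟩, hvσ⟩ => ⟨hσ, (subset_insert_iff_of_notMem hvσ).1 hσJ⟩,
    fun ⟨hσ, hσJ⟩ => ⟨⟨hσ, hσJ.trans (subset_insert v J)⟩, fun h => hvJ (hσJ h)⟩⟩

theorem link_restr_insert : linkK (restr K (insert v J)) {v} = restr (linkK K {v}) J := by
  ext τ
  simp only [mem_link_singleton, mem_restr]
  exact ⟨fun ⟨⟨hτ, hτJ⟩, hvτ, hvτK, _⟩ =>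
      ⟨⟨hτ, hvτ, hvτK⟩, (subset_insert_iff_of_notMem hvτ).1 hτJ⟩,
    fun ⟨⟨hτ, hvτ, hvτK⟩, hτJ⟩ =>
      ⟨⟨hτ, hτJ.trans (subset_insert v J)⟩, hvτ, hvτK, insert_subset_insert v hτJ⟩⟩

theorem restr_insert_of_notMem_verts (hw : w ∉ verts K) : restr K (insert w J) = restr K J := by
  ext σ
  simp only [mem_restr]
  exact and_congr_right fun hσ => subset_insert_iff_of_notMem fun h => hw (subset_verts hσ h)

end Combinatorics

variable {F : Type*} [Field F]

section Chains

variable {K : Finset (Finset ℕ)} {j : ℕ}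

/-- Extending chains by zero to all finite sets frees the boundary formula (`coeff_bdry`) of
membership side conditions. -/
def coeff : Chain F K j →ₗ[F] Finset ℕ → F :=
  LinearMap.pi fun σ =>
    if h : σ ∈ K.filter (fun σ => σ.card = j) then LinearMap.proj ⟨σ, h⟩ else 0

theorem coeff_of_mem (c : Chain F K j) {σ : Finset ℕ}
    (h : σ ∈ K.filter (fun σ => σ.card = j)) : coeff c σ = c ⟨σ, h⟩ := by
  rw [coeff, LinearMap.pi_apply, dif_pos h, LinearMap.proj_apply]

theorem coeff_of_notMem (c : Chain F K j) {σ : Finset ℕ}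
    (h : σ ∉ K.filter (fun σ => σ.card = j)) : coeff c σ = 0 := by
  rw [coeff, LinearMap.pi_apply, dif_neg h, LinearMap.zero_apply]

theorem coeff_val (c : Chain F K j) (σ : K.filter (fun σ => σ.card = j)) : coeff c σ.1 = c σ :=
  coeff_of_mem c σ.2

theorem chain_ext {c d : Chain F K j} (h : ∀ σ, coeff c σ = coeff d σ) : c = d :=
  funext fun σ => by rw [← coeff_val c, ← coeff_val d, h]

theorem coeff_insert_eq_zero (hK : IsComplex K) (c : Chain F K (j + 1)) {σ : Finset ℕ}
    (hσ : σ ∉ K.filter (fun σ => σ.card = j)) {w : ℕ} (hw : w ∉ σ) :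
    coeff c (insert w σ) = 0 := by
  refine coeff_of_notMem c fun h => hσ ?_
  rw [mem_filter, card_insert_of_notMem hw, Nat.add_right_cancel_iff] at h
  exact mem_filter.2 ⟨hK _ h.1 _ (subset_insert w σ), h.2⟩

theorem coeff_eq_zero_of_notMem_verts (c : Chain F K j) {σ : Finset ℕ} {w : ℕ}
    (hw : w ∉ verts K) (hwσ : w ∈ σ) : coeff c σ = 0 :=
  coeff_of_notMem c fun h => hw (subset_verts (mem_filter.1 h).1 hwσ)

variable (F) in
def sgn (w : ℕ) (τ : Finset ℕ) : F := (-1) ^ (τ.filter (· < w)).card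

variable (F) in
theorem sgn_insert {v : ℕ} {τ : Finset ℕ} (hv : v ∉ τ) (w : ℕ) :
    sgn F w (insert v τ) = (if v < w then -1 else 1) * sgn F w τ := by
  unfold sgn
  rw [filter_insert]
  split_ifs with h
  · rw [card_insert_of_notMem fun h' => hv (mem_of_mem_filter v h'), pow_succ, mul_comm]
  · rw [one_mul]

variable (F) in
theorem sgn_mul_self (w : ℕ) (τ : Finset ℕ) : sgn F w τ * sgn F w τ = 1 := by
  rw [sgn, ← pow_add, ← two_mul, pow_mul, neg_one_sq, one_pow]

variable (F) in
theorem sgn_mul_sgn_insert {v w : ℕ} {τ : Finset ℕ} (hv : v ∉ τ) (hw : w ∉ τ) (hvw : v ≠ w) :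
    sgn F v τ * sgn F w (insert v τ) = -(sgn F w τ * sgn F v (insert w τ)) := by
  rw [sgn_insert F hv, sgn_insert F hw]
  rcases hvw.lt_or_gt with h | h
  · simp [h, h.not_gt]; ring
  · simp [h, h.not_gt]; ring

/-- `U` may be any superset of the vertices, so that chains of `K`, of a deletion and of a link
can be compared through sums over one index set. -/
theorem coeff_bdry (hK : IsComplex K) {U : Finset ℕ} (hU : verts K ⊆ U) (c : Chain F K (j + 1))
    (σ : Finset ℕ) : coeff (bdry F K j c) σ = ∑ w ∈ U \ σ, sgn F w σ * coeff c (insert w σ) := by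
  by_cases hσ : σ ∈ K.filter (fun σ => σ.card = j)
  · have hU' : ∀ w ∈ U \ σ, w ∉ verts K \ σ → sgn F w σ * coeff c (insert w σ) = 0 :=
      fun w hw hw' => by
        rw [coeff_eq_zero_of_notMem_verts c (fun h => hw' (mem_sdiff.2 ⟨h, (mem_sdiff.1 hw).2⟩))
          (mem_insert_self w σ), mul_zero]
    rw [← sum_subset (sdiff_subset_sdiff hU subset_rfl) hU', coeff_of_mem _ hσ,
      ← filter_notMem_eq_sdiff, sum_filter]
    refine sum_congr rfl fun v _ => ?_
    by_cases hv : v ∈ σ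
    · simp [hv]
    by_cases hi : insert v σ ∈ K.filter (fun σ => σ.card = j + 1)
    · simp [hv, hi, coeff_of_mem c hi, sgn]
    · simp [hv, hi, coeff_of_notMem c hi]
  · rw [coeff_of_notMem _ hσ]
    refine (sum_eq_zero fun w hw => ?_).symm
    rw [coeff_insert_eq_zero hK c hσ (mem_sdiff.1 hw).2, mul_zero]

theorem bdry_bdry (hK : IsComplex K) (c : Chain F K (j + 2)) :
    bdry F K j (bdry F K (j + 1) c) = 0 := by
  refine chain_ext fun σ => ?_
  rw [map_zero, Pi.zero_apply, coeff_bdry hK subset_rfl]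
  simp_rw [coeff_bdry hK subset_rfl, mul_sum, sdiff_insert, ← mul_assoc]
  refine sum_sum_erase_eq_zero_of_antisymm _ _ fun v hv w hw hvw => ?_
  rw [sgn_mul_sgn_insert F (mem_sdiff.1 hv).2 (mem_sdiff.1 hw).2 hvw, insert_comm, neg_mul]

end Chains

section Homology

variable {K : Finset (Finset ℕ)}

variable (F) in
noncomputable def cycles (K : Finset (Finset ℕ)) : (j : ℕ) → Submodule F (Chain F K j)
  | 0 => ⊤
  | j + 1 => LinearMap.ker (bdry F K j)

theorem range_bdry_le_cycles (hK : IsComplex K) (j : ℕ) :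
    LinearMap.range (bdry F K j) ≤ cycles F K j := by
  cases j with
  | zero => exact le_top
  | succ j => rintro _ ⟨c, rfl⟩; exact bdry_bdry hK c

theorem hBetti_eq (K : Finset (Finset ℕ)) (j : ℕ) :
    hBetti F K j = finrank F (cycles F K j) - finrank F (LinearMap.range (bdry F K j)) := by
  cases j with
  | zero => rw [hBetti, cycles, finrank_top]
  | succ j => rfl

theorem finrank_chain (K : Finset (Finset ℕ)) (j : ℕ) :
    finrank F (Chain F K j) = (K.filter (fun σ => σ.card = j)).card := by
  rw [finrank_fintype_fun_eq_card, Fintype.card_coe]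

theorem finrank_cycles_add_finrank_range_bdry (K : Finset (Finset ℕ)) (j : ℕ) :
    finrank F (cycles F K (j + 1)) + finrank F (LinearMap.range (bdry F K j)) =
      finrank F (Chain F K (j + 1)) := by
  rw [← LinearMap.finrank_range_add_finrank_ker (bdry F K j), add_comm, cycles]

theorem hBetti_eq_zero {j : ℕ} (h : (verts K).card < j) : hBetti F K j = 0 := by
  have hC : finrank F (Chain F K j) = 0 := by
    rw [finrank_chain, card_eq_zero, filter_eq_empty_iff]
    rintro σ hσ rfl
    exact h.not_ge (card_le_card (subset_verts hσ))
  have := Submodule.finrank_le (cycles F K j)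
  rw [hBetti_eq]
  omega

theorem rtb_eq_sum (hK : K ≠ ∅) {N : ℕ} (hN : (verts K).card < N) :
    rtb F K = ∑ j ∈ range N, hBetti F K j := by
  rw [rtb, if_neg hK]
  exact sum_subset (range_subset_range.2 hN) fun j _ hj =>
    hBetti_eq_zero (by rw [mem_range, not_lt] at hj; omega)

theorem rtb_eq_one_of_verts_eq_empty (h : verts K = ∅) : rtb F K = 1 := by
  rcases eq_empty_or_nonempty K with rfl | ⟨σ, hσ⟩
  · exact if_pos rfl
  have hK : K = {∅} := eq_singleton_iff_unique_mem.2
    ⟨subset_empty.1 (h ▸ subset_verts hσ) ▸ hσ, fun τ hτ => subset_empty.1 (h ▸ subset_verts hτ)⟩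
  subst hK
  have hC : finrank F (Chain F {∅} (0 + 1)) = 0 := by simp
  have hB := (bdry F {∅} 0).finrank_range_le
  rw [rtb_eq_sum (singleton_ne_empty _) (by rw [h, card_empty]; exact zero_lt_one), sum_range_one,
    hBetti, finrank_chain]
  simp only [filter_singleton, card_empty, if_pos, card_singleton]
  omega

end Homology

section Decomposition

variable {X : Finset (Finset ℕ)} {v j : ℕ}

variable (F X v) in
def toDeletion (j : ℕ) : Chain F X j →ₗ[F] Chain F (deletion X v) j :=
  LinearMap.funLeft F F fun σ => ⟨σ.1, filter_subset_filter _ deletion_subset σ.2⟩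

variable (F X v) in
noncomputable def ofLink (j : ℕ) : Chain F (linkK X {v}) j →ₗ[F] Chain F (deletion X v) j :=
  LinearMap.funLeft F F Subtype.val ∘ₗ coeff

/- The sign makes `toLink` anticommute with the boundary (`toLink_bdry`). -/
variable (F X v) in
noncomputable def toLink (j : ℕ) : Chain F X (j + 1) →ₗ[F] Chain F (linkK X {v}) j :=
  LinearMap.pi fun τ => sgn F v τ.1 • (LinearMap.proj (insert v τ.1) ∘ₗ coeff)

variable (v) in
noncomputable def glue (a : Chain F (deletion X v) (j + 1)) (z : Chain F (linkK X {v}) j) :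
    Chain F X (j + 1) := fun σ =>
  if v ∈ σ.1 then sgn F v (σ.1.erase v) * coeff z (σ.1.erase v) else coeff a σ.1

theorem coeff_deletion_of_mem (a : Chain F (deletion X v) j) {σ : Finset ℕ} (h : v ∈ σ) :
    coeff a σ = 0 :=
  coeff_of_notMem a fun hσ => notMem_of_mem_deletion (mem_filter.1 hσ).1 h

theorem coeff_link_of_mem (z : Chain F (linkK X {v}) j) {σ : Finset ℕ} (h : v ∈ σ) :
    coeff z σ = 0 :=
  coeff_of_notMem z fun hσ => (mem_link_singleton.1 (mem_filter.1 hσ).1).2.1 h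

theorem coeff_toDeletion (c : Chain F X j) (σ : Finset ℕ) :
    coeff (toDeletion F X v j c) σ = if v ∈ σ then 0 else coeff c σ := by
  by_cases hσ : σ ∈ (deletion X v).filter (fun σ => σ.card = j)
  · rw [coeff_of_mem _ hσ, if_neg (notMem_of_mem_deletion (mem_filter.1 hσ).1),
      coeff_of_mem c (filter_subset_filter _ deletion_subset hσ)]
    rfl
  rw [coeff_of_notMem _ hσ]
  split_ifs with hv
  · rfl
  refine (coeff_of_notMem c fun h => hσ ?_).symm
  rw [mem_filter] at h ⊢
  exact ⟨mem_deletion.2 ⟨h.1, hv⟩, h.2⟩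

theorem coeff_ofLink (z : Chain F (linkK X {v}) j) (σ : Finset ℕ) :
    coeff (ofLink F X v j z) σ = coeff z σ := by
  by_cases hσ : σ ∈ (deletion X v).filter (fun σ => σ.card = j)
  · rw [coeff_of_mem _ hσ]; rfl
  rw [coeff_of_notMem _ hσ,
    coeff_of_notMem z fun h => hσ (filter_subset_filter _ link_subset_deletion h)]

theorem coeff_toLink (hX : IsComplex X) (c : Chain F X (j + 1)) (τ : Finset ℕ) :
    coeff (toLink F X v j c) τ = if v ∈ τ then 0 else sgn F v τ * coeff c (insert v τ) := by
  by_cases hτ : τ ∈ (linkK X {v}).filter (fun σ => σ.card = j)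
  · rw [coeff_of_mem _ hτ, if_neg (mem_link_singleton.1 (mem_filter.1 hτ).1).2.1]; rfl
  rw [coeff_of_notMem _ hτ]
  split_ifs with hv
  · rfl
  rw [coeff_of_notMem c, mul_zero]
  intro h
  rw [mem_filter, card_insert_of_notMem hv, Nat.add_right_cancel_iff] at h
  exact hτ (mem_filter.2 ⟨mem_link_singleton.2 ⟨hX _ h.1 _ (subset_insert v τ), hv, h.1⟩, h.2⟩)

theorem coeff_glue (a : Chain F (deletion X v) (j + 1)) (z : Chain F (linkK X {v}) j)
    (σ : Finset ℕ) :
    coeff (glue v a z) σ =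
      if v ∈ σ then sgn F v (σ.erase v) * coeff z (σ.erase v) else coeff a σ := by
  by_cases hσ : σ ∈ X.filter (fun σ => σ.card = j + 1)
  · rw [coeff_of_mem _ hσ]; rfl
  rw [coeff_of_notMem _ hσ]
  split_ifs with hv
  · rw [coeff_of_notMem z, mul_zero]
    intro h
    obtain ⟨hL, hcard⟩ := mem_filter.1 h
    refine hσ (mem_filter.2 ⟨?_, ?_⟩)
    · simpa [hv] using (mem_link_singleton.1 hL).2.2
    · rw [← insert_erase hv, card_insert_of_notMem (notMem_erase v σ), hcard]
  · exact (coeff_of_notMem a fun h => hσ (filter_subset_filter _ deletion_subset h)).symm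

theorem toDeletion_glue (a : Chain F (deletion X v) (j + 1)) (z : Chain F (linkK X {v}) j) :
    toDeletion F X v (j + 1) (glue v a z) = a := chain_ext fun σ => by
  rw [coeff_toDeletion, coeff_glue]
  split_ifs with hv
  · exact (coeff_deletion_of_mem a hv).symm
  · rfl

theorem toLink_glue (hX : IsComplex X) (a : Chain F (deletion X v) (j + 1))
    (z : Chain F (linkK X {v}) j) : toLink F X v j (glue v a z) = z := chain_ext fun τ => by
  rw [coeff_toLink hX, coeff_glue, if_pos (mem_insert_self v τ)]
  split_ifs with hv
  · exact (coeff_link_of_mem z hv).symm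
  · rw [erase_insert hv, ← mul_assoc, sgn_mul_self, one_mul]

theorem glue_toDeletion_toLink (hX : IsComplex X) (c : Chain F X (j + 1)) :
    glue v (toDeletion F X v (j + 1) c) (toLink F X v j c) = c := chain_ext fun σ => by
  rw [coeff_glue, coeff_toLink hX, coeff_toDeletion, if_neg (notMem_erase v σ)]
  split_ifs with hv
  · rw [insert_erase hv, ← mul_assoc, sgn_mul_self, one_mul]
  · rfl

variable (F v) in
noncomputable def splitEquiv (hX : IsComplex X) (j : ℕ) :
    Chain F X (j + 1) ≃ₗ[F] Chain F (deletion X v) (j + 1) × Chain F (linkK X {v}) j where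
  __ := (toDeletion F X v (j + 1)).prod (toLink F X v j)
  invFun p := glue v p.1 p.2
  left_inv := glue_toDeletion_toLink hX
  right_inv p := Prod.ext (toDeletion_glue p.1 p.2) (toLink_glue hX p.1 p.2)

theorem finrank_chain_split (hX : IsComplex X) (j : ℕ) :
    finrank F (Chain F X (j + 1)) =
      finrank F (Chain F (deletion X v) (j + 1)) + finrank F (Chain F (linkK X {v}) j) := by
  rw [(splitEquiv F v hX j).finrank_eq, finrank_prod]

theorem toDeletion_injective_zero : Function.Injective (toDeletion F X v 0) := fun c d h =>
  chain_ext fun σ => by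
    have hσ := congrArg (coeff · σ) h
    simp only [coeff_toDeletion] at hσ
    split_ifs at hσ with hv
    · have : σ ∉ X.filter (fun σ => σ.card = 0) := fun h' =>
        (card_pos.2 ⟨v, hv⟩).ne' (mem_filter.1 h').2
      rw [coeff_of_notMem c this, coeff_of_notMem d this]
    · exact hσ

theorem toDeletion_bdry (hX : IsComplex X) (c : Chain F X (j + 1)) :
    toDeletion F X v j (bdry F X j c) =
      bdry F (deletion X v) j (toDeletion F X v (j + 1) c) + ofLink F X v j (toLink F X v j c) := by
  have hU : verts X ⊆ insert v (verts X) := subset_insert v _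
  refine chain_ext fun σ => ?_
  rw [map_add, Pi.add_apply, coeff_toDeletion, coeff_bdry hX hU, coeff_ofLink, coeff_toLink hX,
    coeff_bdry (isComplex_deletion hX) ((verts_mono deletion_subset).trans hU)]
  split_ifs with hv
  · simp [coeff_toDeletion, hv]
  have hvU : v ∈ insert v (verts X) \ σ := mem_sdiff.2 ⟨mem_insert_self v _, hv⟩
  rw [← sum_erase_add _ _ hvU, ← sum_erase_add _ _ hvU, coeff_toDeletion,
    if_pos (mem_insert_self v σ), mul_zero, add_zero]
  congr 1
  refine sum_congr rfl fun w hw => ?_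
  rw [coeff_toDeletion, if_neg]
  simp [hv, (ne_of_mem_erase hw).symm]

theorem toLink_bdry (hX : IsComplex X) (c : Chain F X (j + 2)) :
    toLink F X v j (bdry F X (j + 1) c) = -bdry F (linkK X {v}) j (toLink F X v (j + 1) c) := by
  have hU : verts X ⊆ insert v (verts X) := subset_insert v _
  refine chain_ext fun τ => ?_
  rw [map_neg, Pi.neg_apply, coeff_toLink hX,
    coeff_bdry (isComplex_link hX) ((verts_link_subset.trans (erase_subset _ _)).trans hU)]
  simp_rw [coeff_toLink hX]
  split_ifs with hv
  · simp [hv]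
  have hvU : v ∈ insert v (verts X) \ τ := mem_sdiff.2 ⟨mem_insert_self v _, hv⟩
  rw [← sum_erase_add _ _ hvU, if_pos (mem_insert_self v τ), mul_zero, add_zero,
    coeff_bdry hX hU, sdiff_insert, mul_sum, ← sum_neg_distrib]
  refine sum_congr rfl fun w hw => ?_
  obtain ⟨hwv, hw⟩ := mem_erase.1 hw
  rw [if_neg (by simp [hv, hwv.symm]), ← mul_assoc, ← mul_assoc,
    sgn_mul_sgn_insert F hv (mem_sdiff.1 hw).2 hwv.symm, insert_comm, neg_mul]

theorem bdry_ofLink (hX : IsComplex X) (z : Chain F (linkK X {v}) (j + 1)) :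
    bdry F (deletion X v) j (ofLink F X v (j + 1) z) =
      ofLink F X v j (bdry F (linkK X {v}) j z) :=
  chain_ext fun σ => by
    rw [coeff_ofLink, coeff_bdry (isComplex_deletion hX) (verts_mono deletion_subset),
      coeff_bdry (isComplex_link hX) (verts_link_subset.trans (erase_subset _ _))]
    simp_rw [coeff_ofLink]

end Decomposition

section LongExactSequence

variable {X : Finset (Finset ℕ)} {v j : ℕ}

theorem bdry_eq_zero_of_split (hX : IsComplex X) {c : Chain F X (j + 1)}
    (h₁ : bdry F (deletion X v) j (toDeletion F X v (j + 1) c) +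
      ofLink F X v j (toLink F X v j c) = 0)
    (h₂ : toLink F X v j c ∈ cycles F (linkK X {v}) j) : bdry F X j c = 0 := by
  cases j with
  | zero => exact toDeletion_injective_zero (by rw [toDeletion_bdry hX, h₁, map_zero])
  | succ j =>
    refine (splitEquiv F v hX j).injective ?_
    rw [map_zero]
    refine Prod.ext ?_ ?_
    · exact (toDeletion_bdry hX c).trans h₁
    · show toLink F X v j (bdry F X (j + 1) c) = 0
      rw [toLink_bdry hX, LinearMap.mem_ker.1 h₂, neg_zero]

theorem ofLink_injective : Function.Injective (ofLink F X v j) := fun z w h =>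
  chain_ext fun σ => by rw [← coeff_ofLink, h, coeff_ofLink]

theorem map_ofLink_cycles_le (hX : IsComplex X) (j : ℕ) :
    (cycles F (linkK X {v}) j).map (ofLink F X v j) ≤ cycles F (deletion X v) j := by
  cases j with
  | zero => exact le_top
  | succ j =>
    rintro _ ⟨z, hz, rfl⟩
    exact LinearMap.mem_ker.2 (by rw [bdry_ofLink hX, LinearMap.mem_ker.1 hz, map_zero])

variable (F X v) in
/-- Modulo boundaries of the link, this is both the kernel of `H̃(lk v) → H̃(X \ v)` and the image
of the connecting map `H̃(X) → H̃(lk v)`. -/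
noncomputable def boundingLinkCycles (j : ℕ) : Submodule F (Chain F (deletion X v) j) :=
  (cycles F (linkK X {v}) j).map (ofLink F X v j) ⊓ LinearMap.range (bdry F (deletion X v) j)

theorem finrank_cycles_link_add_le (hX : IsComplex X) (j : ℕ) :
    finrank F (cycles F (linkK X {v}) j) + finrank F (LinearMap.range (bdry F (deletion X v) j)) ≤
      finrank F (boundingLinkCycles F X v j) + finrank F (cycles F (deletion X v) j) := by
  have hI :=
    (Submodule.equivMapOfInjective _ ofLink_injective (cycles F (linkK X {v}) j)).finrank_eq
  have hsup := Submodule.finrank_sup_add_finrank_inf_eq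
    ((cycles F (linkK X {v}) j).map (ofLink F X v j)) (LinearMap.range (bdry F (deletion X v) j))
  have hle : (cycles F (linkK X {v}) j).map (ofLink F X v j) ⊔
      LinearMap.range (bdry F (deletion X v) j) ≤ cycles F (deletion X v) j :=
    sup_le (map_ofLink_cycles_le hX j) (range_bdry_le_cycles (isComplex_deletion hX) j)
  have := Submodule.finrank_mono hle
  rw [boundingLinkCycles]
  omega

theorem finrank_cycles_deletion_add_le (hX : IsComplex X) (j : ℕ) :
    finrank F (cycles F (deletion X v) (j + 1)) + finrank F (boundingLinkCycles F X v j) ≤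
      finrank F (cycles F X (j + 1)) := by
  set Z := cycles F X (j + 1)
  set f := (ofLink F X v j ∘ₗ toLink F X v j).domRestrict Z
  have hrange : boundingLinkCycles F X v j ≤ LinearMap.range f := by
    rintro _ ⟨⟨z, hz, rfl⟩, a, ha⟩
    have hc : glue v (-a) z ∈ Z := bdry_eq_zero_of_split hX
      (by rw [toDeletion_glue, toLink_glue hX, map_neg, ha, neg_add_cancel])
      (by rwa [toLink_glue hX])
    exact ⟨⟨_, hc⟩, by simp [f, toLink_glue hX]⟩
  have hker : cycles F (deletion X v) (j + 1) ≤
      (LinearMap.ker f).map (toDeletion F X v (j + 1) ∘ₗ Z.subtype) := by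
    intro a ha
    have hc : glue v a 0 ∈ Z := bdry_eq_zero_of_split hX
      (by rw [toDeletion_glue, toLink_glue hX, map_zero, add_zero]; exact LinearMap.mem_ker.1 ha)
      (by rw [toLink_glue hX]; exact zero_mem _)
    exact ⟨⟨_, hc⟩, by simp [f, toLink_glue hX], toDeletion_glue a 0⟩
  have := f.finrank_range_add_finrank_ker
  have := Submodule.finrank_mono hrange
  have := (Submodule.finrank_mono hker).trans (Submodule.finrank_map_le _ _)
  omega

theorem finrank_range_bdry_succ_le (hX : IsComplex X) (j : ℕ) :
    finrank F (LinearMap.range (bdry F X (j + 1))) ≤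
      finrank F (cycles F (deletion X v) (j + 1)) +
        finrank F (LinearMap.range (bdry F (linkK X {v}) j)) := by
  have := finrank_cycles_add_finrank_range_bdry (F := F) X (j + 1)
  have := finrank_cycles_add_finrank_range_bdry (F := F) (deletion X v) (j + 1)
  have := finrank_cycles_add_finrank_range_bdry (F := F) (linkK X {v}) j
  have := finrank_chain_split (F := F) (v := v) hX (j + 1)
  have := finrank_cycles_deletion_add_le (F := F) (v := v) hX (j + 1)
  have := finrank_cycles_link_add_le (F := F) (v := v) hX (j + 1)
  omega

theorem hBetti_link_le (hX : IsComplex X) (j : ℕ) :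
    hBetti F (linkK X {v}) j ≤ hBetti F (deletion X v) j + hBetti F X (j + 1) := by
  rw [hBetti_eq, hBetti_eq, hBetti_eq]
  have := Submodule.finrank_mono (range_bdry_le_cycles (F := F) (isComplex_link (v := v) hX) j)
  have := Submodule.finrank_mono (range_bdry_le_cycles (F := F) (isComplex_deletion (v := v) hX) j)
  have := Submodule.finrank_mono (range_bdry_le_cycles (F := F) hX (j + 1))
  have := finrank_cycles_link_add_le (F := F) (v := v) hX j
  have := finrank_cycles_deletion_add_le (F := F) (v := v) hX j
  have := finrank_range_bdry_succ_le (F := F) (v := v) hX j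
  omega

theorem rtb_link_le (hX : IsComplex X) (hv : {v} ∈ X) :
    rtb F (linkK X {v}) ≤ rtb F (deletion X v) + rtb F X := by
  have hL : ∅ ∈ linkK X {v} :=
    mem_link_singleton.2 ⟨hX _ hv _ (empty_subset _), notMem_empty v, by rwa [insert_empty]⟩
  have hN : ∀ K ⊆ X, (verts K).card < (verts X).card + 1 := fun K hK =>
    Nat.lt_succ_of_le (card_le_card (verts_mono hK))
  rw [rtb_eq_sum (ne_empty_of_mem hL) (hN _ (link_subset_deletion.trans deletion_subset)),
    rtb_eq_sum (ne_empty_of_mem (link_subset_deletion hL)) (hN _ deletion_subset),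
    rtb_eq_sum (ne_empty_of_mem (deletion_subset (link_subset_deletion hL)))
      (Nat.lt_succ_of_lt (hN _ subset_rfl)),
    sum_range_succ' _ ((verts X).card + 1)]
  calc ∑ j ∈ range ((verts X).card + 1), hBetti F (linkK X {v}) j
      ≤ ∑ j ∈ range ((verts X).card + 1), (hBetti F (deletion X v) j + hBetti F X (j + 1)) :=
        sum_le_sum fun j _ => hBetti_link_le hX j
    _ ≤ _ := by rw [sum_add_distrib]; omega

end LongExactSequence

section Tightness

variable {K : Finset (Finset ℕ)} {v w : ℕ} {W : Finset ℕ}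

theorem dtilde_link_le (hK : IsComplex K) (hv : {v} ∈ K) {V : Finset ℕ} (hvV : v ∈ V) :
    Dtilde F (V.erase v) (linkK K {v}) ≤ Dtilde F V K := by
  rw [Dtilde, Dtilde]
  conv_rhs => rw [← insert_erase hvV, sum_powerset_insert (notMem_erase v V), ← sum_add_distrib]
  refine sum_le_sum fun J hJ => ?_
  have hvJ : v ∉ J := fun h => notMem_erase v V (mem_powerset.1 hJ h)
  have hv' : {v} ∈ restr K (insert v J) :=
    mem_restr.2 ⟨hv, singleton_subset_iff.2 (mem_insert_self v J)⟩
  have := rtb_link_le (F := F) (isComplex_restr hK _) hv'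
  rwa [deletion_restr_insert hvJ, link_restr_insert] at this

theorem dtilde_insert_of_notMem_verts (hw : w ∉ verts K) (hwW : w ∉ W) :
    Dtilde F (insert w W) K = 2 * Dtilde F W K := by
  rw [Dtilde, Dtilde, sum_powerset_insert hwW]
  simp_rw [restr_insert_of_notMem_verts hw]
  ring

theorem dtilde_union_verts {S : Finset ℕ} (hS : Disjoint S (verts K)) :
    Dtilde F (S ∪ verts K) K = 2 ^ S.card * Dtilde F (verts K) K := by
  induction S using Finset.induction_on with
  | empty => rw [empty_union, card_empty, pow_zero, one_mul]
  | insert w S hwS ih =>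
    rw [disjoint_insert_left] at hS
    rw [insert_union, dtilde_insert_of_notMem_verts hS.1 (by simp [hwS, hS.1]), ih hS.2,
      card_insert_of_notMem hwS, pow_succ]
    ring

/-- With `W = verts K` this reads `2 ^ (m - d - 1) ≤ D̃(K)`; tightness is the equality case. -/
theorem two_pow_card_le_dtilde (hK : IsComplex K) (hW : verts K ⊆ W) :
    2 ^ W.card ≤ 2 ^ K.sup card * Dtilde F W K := by
  induction hs : K.sup card using Nat.strong_induction_on generalizing K W with
  | _ s ih =>
    rcases (verts K).eq_empty_or_nonempty with hV | ⟨v, hv⟩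
    · have hs0 : s = 0 := by
        have := sup_card_le_card_verts K
        rw [hV, card_empty] at this
        omega
      have hrtb : ∀ J ∈ W.powerset, rtb F (restr K J) = 1 := fun J _ =>
        rtb_eq_one_of_verts_eq_empty (subset_empty.1 (hV ▸ verts_mono (filter_subset _ _)))
      rw [hs0, pow_zero, one_mul, Dtilde, sum_congr rfl hrtb, sum_const, card_powerset,
        smul_eq_mul, mul_one]
    have hvK : {v} ∈ K := singleton_mem_of_mem_verts hK hv
    have hvW := hW hv
    have hL := sup_card_link_add_one_le hvK
    have ihL := ih _ (by omega) (isComplex_link hK)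
      (verts_link_subset.trans (erase_subset_erase v hW)) rfl
    calc 2 ^ W.card = 2 * 2 ^ (W.erase v).card := by
          rw [card_erase_of_mem hvW, ← pow_succ', Nat.sub_add_cancel (card_pos.2 ⟨v, hvW⟩)]
      _ ≤ 2 * (2 ^ (linkK K {v}).sup card * Dtilde F (W.erase v) (linkK K {v})) := by gcongr
      _ ≤ 2 * (2 ^ (linkK K {v}).sup card * Dtilde F W K) := by
          gcongr; exact dtilde_link_le hK hvK hvW
      _ = 2 ^ ((linkK K {v}).sup card + 1) * Dtilde F W K := by ring
      _ ≤ 2 ^ s * Dtilde F W K := by gcongr <;> omega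

theorem isTight_link_singleton (hK : IsComplex K) (ht : IsTight F K) (hv : {v} ∈ K) :
    IsTight F (linkK K {v}) ∧ (linkK K {v}).sup card + 1 = K.sup card := by
  have hvV : v ∈ verts K := subset_verts hv (mem_singleton_self v)
  have hLV : verts (linkK K {v}) ⊆ (verts K).erase v := verts_link_subset
  have hcard := card_le_card hLV
  rw [card_erase_of_mem hvV] at hcard
  have hghost : Dtilde F ((verts K).erase v) (linkK K {v}) =
      2 ^ ((verts K).card - 1 - (verts (linkK K {v})).card) *
        Dtilde F (verts (linkK K {v})) (linkK K {v}) := by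
    rw [← sdiff_union_of_subset hLV, dtilde_union_verts sdiff_disjoint, card_sdiff_of_subset hLV,
      card_erase_of_mem hvV]
  have hup := (dtilde_link_le hK hv hvV).trans_eq ht
  rw [hghost] at hup
  have hlow := two_pow_card_le_dtilde (F := F) (isComplex_link (v := v) hK) subset_rfl
  have := sup_card_link_add_one_le hv
  have := sup_card_le_card_verts K
  have := sup_card_le_card_verts (linkK K {v})
  obtain ⟨hdim, hD⟩ := two_pow_squeeze hup hlow (by omega)
  exact ⟨hD, by omega⟩

theorem isTight_link (hK : IsComplex K) (ht : IsTight F K) {σ : Finset ℕ} (hσ : σ ∈ K) :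
    IsTight F (linkK K σ) ∧ (linkK K σ).sup card + σ.card = K.sup card := by
  induction σ using Finset.induction_on generalizing K with
  | empty => exact ⟨(link_empty K).symm ▸ ht, by rw [link_empty, card_empty, add_zero]⟩
  | insert v τ hvτ ih =>
    have hv : {v} ∈ K := hK _ hσ _ (singleton_subset_iff.2 (mem_insert_self v τ))
    have hτ : τ ∈ linkK K {v} := mem_link_singleton.2 ⟨hK _ hσ _ (subset_insert v τ), hvτ, hσ⟩
    obtain ⟨htL, hdimL⟩ := isTight_link_singleton hK ht hv
    obtain ⟨htτ, hdimτ⟩ := ih (isComplex_link hK) htL hτ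
    rw [link_insert hK hvτ, card_insert_of_notMem hvτ]
    exact ⟨htτ, by omega⟩

end Tightness

end TightComplex

theorem stmt14_general (F : Type*) [Field F] (K : Finset (Finset ℕ))
    (hK : IsComplex K) (ht : IsTight F K) :
    IsPure K ∧ ∀ σ ∈ K, IsTight F (linkK K σ) := by
  refine ⟨fun σ hσ hmax => ?_, fun σ hσ => (TightComplex.isTight_link hK ht hσ).1⟩
  have := (TightComplex.isTight_link hK ht hσ).2
  rwa [TightComplex.sup_card_link_eq_zero hmax, zero_add] at this

/-- A tight complex is pure, and all its links are tight. -/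
theorem stmt14 (F : Type*) [Field F] (m : ℕ) (K : Finset (Finset ℕ))
    (hK : IsComplex K) (hm : (verts K).card = m) (ht : IsTight F K) :
    IsPure K ∧ ∀ σ ∈ K, IsTight F (linkK K σ) :=
  stmt14_general F K hK ht
end
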